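/- arXiv:1601.01267 — 5 statements merged into one kernel-verified Lean document; each statement's English description precedes it below -/
import Mathlib

section
/- Let φ : (0,∞) → (0,∞) be a C¹ function satisfying (φ₁) and (φ₂), and let N ≥ 1. Define A : ℝᴺ → ℝᴺ by A(x) = φ(|x|)·x for x ≠ 0 and A(0) = 0. Then for all x, y ∈ ℝᴺ with x ≠ y one has ⟨A(x) − A(y), x − y⟩ > 0, where ⟨·,·⟩ is the Euclidean inner product. -/
open MeasureTheory Real Set Filter RealInnerProductSpace

/-- strict monotonicity of the φ-Laplacian vector field:
under (φ₁)-(φ₂), the map A(x) = φ(|x|)x (A(0) = 0) on ℝᴺ satisfies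
⟨A(x) − A(y), x − y⟩ > 0 for all x ≠ y. -/
theorem stmt5
    (N : ℕ) (hN : 1 ≤ N)
    (φ Φ : ℝ → ℝ)
    (hφC1 : ContDiffOn ℝ 1 φ (Set.Ioi 0))
    (hφpos : ∀ t > (0:ℝ), 0 < φ t)
    (hΦ : ∀ t : ℝ, Φ t = ∫ s in (0:ℝ)..|t|, φ s * s)
    (hφ1 : ∀ t > (0:ℝ), 0 < deriv (fun s => φ s * s) t)
    (l m : ℝ) (hl : 1 < l) (hm : 1 < m)
    (hφ2 : ∀ t > (0:ℝ), l ≤ φ t * t ^ 2 / Φ t ∧ φ t * t ^ 2 / Φ t ≤ m)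
    (A : EuclideanSpace ℝ (Fin N) → EuclideanSpace ℝ (Fin N))
    (hA0 : A 0 = 0)
    (hA : ∀ x : EuclideanSpace ℝ (Fin N), x ≠ 0 → A x = φ ‖x‖ • x) :
    ∀ x y : EuclideanSpace ℝ (Fin N), x ≠ y → 0 < ⟪A x - A y, x - y⟫ := by
  have hfmono : StrictMonoOn (fun s => φ s * s) (Set.Ioi 0) := by
    apply strictMonoOn_of_deriv_pos (convex_Ioi 0)
    · intro t ht
      have hd : DifferentiableAt ℝ (fun s => φ s * s) t :=
        differentiableAt_of_deriv_ne_zero (ne_of_gt (hφ1 t ht))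
      exact hd.continuousAt.continuousWithinAt
    · rw [interior_Ioi]; exact fun t ht => hφ1 t ht
  intro x y hxy
  by_cases hx : x = 0
  · subst hx
    have hy : y ≠ 0 := fun h => hxy h.symm
    have hy' : (0:ℝ) < ‖y‖ := norm_pos_iff.mpr hy
    rw [hA0, hA y hy]
    have : ⟪(0 : EuclideanSpace ℝ (Fin N)) - φ ‖y‖ • y, (0 : EuclideanSpace ℝ (Fin N)) - y⟫
        = φ ‖y‖ * ‖y‖ ^ 2 := by
      rw [zero_sub, zero_sub, inner_neg_neg, real_inner_smul_left,
        real_inner_self_eq_norm_sq]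
    rw [this]
    exact mul_pos (hφpos _ hy') (by positivity)
  · by_cases hy : y = 0
    · subst hy
      have hx' : (0:ℝ) < ‖x‖ := norm_pos_iff.mpr hx
      rw [hA0, hA x hx]
      have : ⟪φ ‖x‖ • x - (0 : EuclideanSpace ℝ (Fin N)), x - (0 : EuclideanSpace ℝ (Fin N))⟫
          = φ ‖x‖ * ‖x‖ ^ 2 := by
        rw [sub_zero, sub_zero, real_inner_smul_left, real_inner_self_eq_norm_sq]
      rw [this]
      exact mul_pos (hφpos _ hx') (by positivity)
    · have hx' : (0:ℝ) < ‖x‖ := norm_pos_iff.mpr hx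
      have hy' : (0:ℝ) < ‖y‖ := norm_pos_iff.mpr hy
      have hφx := hφpos ‖x‖ hx'
      have hφy := hφpos ‖y‖ hy'
      have hp : ⟪x, y⟫ ≤ ‖x‖ * ‖y‖ := real_inner_le_norm x y
      rw [hA x hx, hA y hy]
      have expand : ⟪φ ‖x‖ • x - φ ‖y‖ • y, x - y⟫ =
          (φ ‖x‖ * ‖x‖ - φ ‖y‖ * ‖y‖) * (‖x‖ - ‖y‖)
          + (φ ‖x‖ + φ ‖y‖) * (‖x‖ * ‖y‖ - ⟪x, y⟫) := by
        simp only [inner_sub_left, inner_sub_right, real_inner_smul_left,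
          real_inner_self_eq_norm_sq, real_inner_comm y x]
        ring
      rw [expand]
      rcases eq_or_ne ‖x‖ ‖y‖ with hab | hab
      · have hxyne : x - y ≠ 0 := sub_ne_zero_of_ne hxy
        have hns : (0:ℝ) < ‖x - y‖ ^ 2 := pow_pos (norm_pos_iff.mpr hxyne) 2
        rw [norm_sub_sq_real] at hns
        have hlt : ⟪x, y⟫ < ‖x‖ * ‖y‖ := by nlinarith [hab]
        have h1 : (φ ‖x‖ * ‖x‖ - φ ‖y‖ * ‖y‖) * (‖x‖ - ‖y‖) = 0 := by rw [hab]; ring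
        nlinarith
      · have h2 : (0:ℝ) ≤ (φ ‖x‖ + φ ‖y‖) * (‖x‖ * ‖y‖ - ⟪x, y⟫) := by
          apply mul_nonneg (by linarith) (by linarith)
        have h1 : 0 < (φ ‖x‖ * ‖x‖ - φ ‖y‖ * ‖y‖) * (‖x‖ - ‖y‖) := by
          rcases lt_or_gt_of_ne hab with h | h
          · have := hfmono hx' hy' h
            simp only at this
            nlinarith
          · have := hfmono hy' hx' h
            simp only at this
            nlinarith
        linarith
end

section
/- Let φ : (0,∞) → (0,∞) be a C¹ function satisfying (φ₁)–(φ₃) with constants l₁, m₁ from (φ₃), let N ≥ 1, L > 0, c > 0, and let g : [0,∞) → [0,∞) be continuous, non-decreasing, and with g(t) > 0 for t > 0. Suppose w ∈ C¹([0,L]) with w ≥ 0 satisfies r^{N−1}·h(w'(r)) = c·∫₀^r t^{N−1} g(w(t)) dt for all 0 < r < L (so w' ≥ 0 and w'(0) = 0). Then for all 0 < r < L: (c/(m₁·N))·G(w(0), w(r)) ≤ Φ(w'(r)) ≤ (c/l₁)·G(w(0), w(r)), where G(x,y) = ∫_x^y g(t) dt for 0 ≤ x < y. -/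
open MeasureTheory Real Set Filter
open scoped Topology

set_option maxHeartbeats 1000000 in
/-- under (φ₁)-(φ₃), if w ∈ C¹([0,L]), w ≥ 0, satisfies the radial
identity r^{N−1}h(w'(r)) = c∫₀^r t^{N−1}g(w(t))dt on (0,L) with g continuous,
non-decreasing and positive on (0,∞), then
(c/(m₁N))·G(w(0),w(r)) ≤ Φ(w'(r)) ≤ (c/l₁)·G(w(0),w(r)) for 0 < r < L,
where G(x,y) = ∫ₓ^y g(t)dt. -/
theorem stmt8
    (N : ℕ) (hN : 1 ≤ N) (L c : ℝ) (hL : 0 < L) (hc : 0 < c)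
    (φ Φ hfun : ℝ → ℝ)
    (hφC1 : ContDiffOn ℝ 1 φ (Set.Ioi 0))
    (hφpos : ∀ t > (0:ℝ), 0 < φ t)
    (hΦ : ∀ t : ℝ, Φ t = ∫ s in (0:ℝ)..|t|, φ s * s)
    (hφ1 : ∀ t > (0:ℝ), 0 < deriv (fun s => φ s * s) t)
    (l m l₁ m₁ : ℝ) (hl : 1 < l) (hm : 1 < m)
    (hφ2 : ∀ t > (0:ℝ), l ≤ φ t * t ^ 2 / Φ t ∧ φ t * t ^ 2 / Φ t ≤ m)
    (hl₁ : 0 < l₁) (hm₁ : 0 < m₁)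
    (hφ3 : ∀ t > (0:ℝ), l₁ ≤ deriv (fun s => φ s * s) t * t / (φ t * t) ∧
      deriv (fun s => φ s * s) t * t / (φ t * t) ≤ m₁)
    (hh0 : hfun 0 = 0)
    (hhdef : ∀ t > (0:ℝ), hfun t = φ t * t)
    (g : ℝ → ℝ) (hg_cont : ContinuousOn g (Set.Ici 0))
    (hg_nonneg : ∀ t ≥ (0:ℝ), 0 ≤ g t)
    (hg_mono : MonotoneOn g (Set.Ici 0))
    (hg_pos : ∀ t > (0:ℝ), 0 < g t)
    (w : ℝ → ℝ)
    (hw : ContDiffOn ℝ 1 w (Set.Icc 0 L))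
    (hw_nonneg : ∀ r ∈ Set.Icc (0:ℝ) L, 0 ≤ w r)
    (h_ode : ∀ r : ℝ, 0 < r → r < L →
      r ^ (N - 1) * hfun (derivWithin w (Set.Icc 0 L) r) =
        c * ∫ t in (0:ℝ)..r, t ^ (N - 1) * g (w t))
    (hw'_nonneg : ∀ r ∈ Set.Ico (0:ℝ) L, 0 ≤ derivWithin w (Set.Icc 0 L) r)
    (hw'0 : derivWithin w (Set.Icc 0 L) 0 = 0) :
    ∀ r : ℝ, 0 < r → r < L →
      (c / (m₁ * N)) * (∫ t in (w 0)..(w r), g t) ≤ Φ (derivWithin w (Set.Icc 0 L) r) ∧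
      Φ (derivWithin w (Set.Icc 0 L) r) ≤ (c / l₁) * ∫ t in (w 0)..(w r), g t := by
  intro r hr0 hrL
  have hU : UniqueDiffOn ℝ (Set.Icc (0:ℝ) L) := uniqueDiffOn_Icc hL
  set u : ℝ → ℝ := derivWithin w (Set.Icc 0 L) with hu
  set n : ℕ := N - 1 with hn
  have hn1 : n + 1 = N := Nat.succ_pred_eq_of_pos hN
  have hNR : ((n:ℝ) + 1) = (N:ℝ) := by exact_mod_cast hn1
  have hNpos : (0:ℝ) < N := Nat.cast_pos.2 (by omega)
  have hwc : ContinuousOn w (Set.Icc 0 L) := hw.continuousOn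
  have hucont : ContinuousOn u (Set.Icc 0 L) := hw.continuousOn_derivWithin hU le_rfl
  have hmem_nhds : ∀ s : ℝ, 0 < s → s < L → Set.Icc (0:ℝ) L ∈ 𝓝 s := fun s h1 h2 =>
    Icc_mem_nhds h1 h2
  have hwd : ∀ s : ℝ, 0 < s → s < L → HasDerivAt w (u s) s := by
    intro s h1 h2
    have h3 : DifferentiableWithinAt ℝ w (Set.Icc 0 L) s :=
      (hw.differentiableOn one_ne_zero) s ⟨h1.le, h2.le⟩
    have h4 : DifferentiableAt ℝ w s := h3.differentiableAt (hmem_nhds s h1 h2)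
    have h5 : derivWithin w (Set.Icc 0 L) s = deriv w s := h4.derivWithin (hU s ⟨h1.le, h2.le⟩)
    rw [hu, h5]; exact h4.hasDerivAt
  have hwmono : MonotoneOn w (Set.Icc 0 L) := by
    apply monotoneOn_of_deriv_nonneg (convex_Icc _ _) hwc
    · rw [interior_Icc]; intro x hx
      exact ((hwd x hx.1 hx.2).differentiableAt).differentiableWithinAt
    · rw [interior_Icc]; intro x hx
      rw [(hwd x hx.1 hx.2).deriv]
      exact hw'_nonneg x ⟨hx.1.le, hx.2⟩
  have hwnn : ∀ s ∈ Set.Icc (0:ℝ) L, w s ∈ Set.Ici (0:ℝ) := fun s hs => hw_nonneg s hs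
  have hgwc : ContinuousOn (fun t => g (w t)) (Set.Icc 0 L) := hg_cont.comp hwc hwnn
  have hkerc : ContinuousOn (fun t : ℝ => t ^ n * g (w t)) (Set.Icc 0 L) :=
    ((continuous_pow n).continuousOn).mul hgwc
  set H : ℝ → ℝ := fun x => ∫ t in (0:ℝ)..x, t ^ n * g (w t) with hHdef
  have hker_nonneg : ∀ t ∈ Set.Icc (0:ℝ) L, 0 ≤ t ^ n * g (w t) := fun t ht =>
    mul_nonneg (pow_nonneg ht.1 n) (hg_nonneg _ (hw_nonneg t ht))
  have hHint : ∀ a b : ℝ, a ∈ Set.Icc (0:ℝ) L → b ∈ Set.Icc (0:ℝ) L →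
      IntervalIntegrable (fun t : ℝ => t ^ n * g (w t)) volume a b := by
    intro a b ha hb
    exact (hkerc.mono (uIcc_subset_Icc ha hb)).intervalIntegrable
  have h0L : (0:ℝ) ∈ Set.Icc (0:ℝ) L := ⟨le_rfl, hL.le⟩
  have hHsub : ∀ a b : ℝ, a ∈ Set.Icc (0:ℝ) L → b ∈ Set.Icc (0:ℝ) L →
      H b - H a = ∫ t in a..b, t ^ n * g (w t) := by
    intro a b ha hb
    exact intervalIntegral.integral_interval_sub_left (hHint 0 b h0L hb) (hHint 0 a h0L ha)
  have hHmono : MonotoneOn H (Set.Icc 0 L) := by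
    intro a ha b hb hab
    have h1 := hHsub a b ha hb
    have h2 : 0 ≤ ∫ t in a..b, t ^ n * g (w t) :=
      intervalIntegral.integral_nonneg hab
        (fun t ht => hker_nonneg t ⟨le_trans ha.1 ht.1, le_trans ht.2 hb.2⟩)
    linarith
  have hH0 : H 0 = 0 := intervalIntegral.integral_same
  have hHnonneg : ∀ s ∈ Set.Icc (0:ℝ) L, 0 ≤ H s := fun s hs =>
    hH0 ▸ hHmono h0L hs hs.1
  have hH' : ∀ s : ℝ, 0 < s → s < L → HasDerivAt H (s ^ n * g (w s)) s := by
    intro s h1 h2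
    exact intervalIntegral.integral_hasDerivAt_right (hHint 0 s h0L ⟨h1.le, h2.le⟩)
      (ContinuousOn.stronglyMeasurableAtFilter isOpen_Ioo
        (hkerc.mono Set.Ioo_subset_Icc_self) s ⟨h1, h2⟩)
      ((hkerc s ⟨h1.le, h2.le⟩).continuousAt (hmem_nhds s h1 h2))
  have hHcont : ContinuousOn H (Set.Icc 0 L) := by
    have h1 := intervalIntegral.continuousOn_primitive_interval'
      (hHint 0 L h0L ⟨hL.le, le_rfl⟩) (by rw [uIcc_of_le hL.le]; exact h0L)
    rwa [uIcc_of_le hL.le] at h1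
  have hode : ∀ s : ℝ, 0 < s → s < L → hfun (u s) = c * H s / s ^ n := by
    intro s h1 h2
    have h3 := h_ode s h1 h2
    have hsn : (s:ℝ) ^ n ≠ 0 := (pow_pos h1 n).ne'
    have h4 : (∫ t in (0:ℝ)..s, t ^ n * g (w t)) = H s := rfl
    rw [h4] at h3
    field_simp
    linarith [h3]
  -- Φ facts
  have hΦ0 : Φ 0 = 0 := by rw [hΦ 0]; simp
  have hφid_int : ∀ M : ℝ, 0 < M → IntervalIntegrable (fun s => φ s * s) volume 0 M := by
    intro M hM
    by_contra hcon
    have h0 : Φ M = 0 := by rw [hΦ M, abs_of_pos hM, intervalIntegral.integral_undef hcon]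
    have h1 := (hφ2 M hM).1
    rw [h0, div_zero] at h1
    linarith
  have hφidc : ContinuousOn (fun s : ℝ => φ s * s) (Set.Ioi 0) :=
    hφC1.continuousOn.mul continuousOn_id
  have hΦderiv : ∀ t : ℝ, 0 < t → HasDerivAt Φ (φ t * t) t := by
    intro t ht
    have hF : HasDerivAt (fun x => ∫ s in (0:ℝ)..x, φ s * s) (φ t * t) t := by
      apply intervalIntegral.integral_hasDerivAt_right (hφid_int t ht)
        (ContinuousOn.stronglyMeasurableAtFilter isOpen_Ioi hφidc t ht)
      exact (hφidc t ht).continuousAt (Ioi_mem_nhds ht)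
    apply hF.congr_of_eventuallyEq
    filter_upwards [Ioi_mem_nhds ht] with x hx
    rw [hΦ x, abs_of_pos hx]
  have hΦcont : ∀ M : ℝ, 0 ≤ M → ContinuousOn Φ (Set.Icc 0 M) := by
    intro M hM
    rcases eq_or_lt_of_le hM with h | h
    · intro x hx
      rw [← h] at hx
      have : x = 0 := le_antisymm hx.2 hx.1
      subst this
      rw [← h]
      simp only [Set.Icc_self]
      exact continuousWithinAt_singleton
    · have hcont := intervalIntegral.continuousOn_primitive_interval' (hφid_int M h)
        (by rw [uIcc_of_le hM]; exact ⟨le_rfl, hM⟩)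
      rw [uIcc_of_le hM] at hcont
      apply hcont.congr
      intro x hx
      rw [hΦ x, abs_of_nonneg hx.1]
  have hfun_pos : ∀ t : ℝ, 0 < t → 0 < hfun t := fun t ht => by
    rw [hhdef t ht]; exact mul_pos (hφpos t ht) ht
  have hu0 : ∀ s : ℝ, 0 < s → s < L → H s = 0 → u s = 0 := by
    intro s h1 h2 h3
    by_contra hne
    have h4 : 0 < u s := lt_of_le_of_ne (hw'_nonneg s ⟨h1.le, h2⟩) (Ne.symm hne)
    have h5 := hode s h1 h2
    rw [h3] at h5
    simp at h5
    exact absurd h5 (ne_of_gt (hfun_pos _ h4))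
  have hupos : ∀ s : ℝ, 0 < s → s < L → 0 < H s → 0 < u s := by
    intro s h1 h2 h3
    rcases (hw'_nonneg s ⟨h1.le, h2⟩).eq_or_lt with he | hlt
    · exfalso
      have h5 := hode s h1 h2
      rw [← he, hh0] at h5
      have : 0 < c * H s / s ^ n := by positivity
      linarith [h5]
    · exact hlt
  have hconst : ∀ ρ : ℝ, ρ ∈ Set.Icc (0:ℝ) L → (∀ s, 0 < s → s < ρ → u s = 0) →
      w ρ = w 0 := by
    intro ρ hρ hz
    have hanti : AntitoneOn w (Set.Icc 0 ρ) := by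
      apply antitoneOn_of_deriv_nonpos (convex_Icc _ _)
        (hwc.mono (Set.Icc_subset_Icc le_rfl hρ.2))
      · rw [interior_Icc]; intro x hx
        exact ((hwd x hx.1 (lt_of_lt_of_le hx.2 hρ.2)).differentiableAt).differentiableWithinAt
      · rw [interior_Icc]; intro x hx
        rw [(hwd x hx.1 (lt_of_lt_of_le hx.2 hρ.2)).deriv, hz x hx.1 hx.2]
    exact le_antisymm (hanti ⟨le_rfl, hρ.1⟩ ⟨hρ.1, le_rfl⟩ hρ.1)
      (hwmono h0L hρ hρ.1)
  rcases (hHnonneg r ⟨hr0.le, hrL.le⟩).eq_or_lt with hHr | hHr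
  · -- trivial case : H r = 0
    have hHr' : H r = 0 := hHr.symm
    have hur : u r = 0 := hu0 r hr0 hrL hHr'
    have hwr : w r = w 0 := by
      apply hconst r ⟨hr0.le, hrL.le⟩
      intro s hs1 hs2
      apply hu0 s hs1 (hs2.trans hrL)
      have h1 : H s ≤ H r := hHmono ⟨hs1.le, (hs2.trans hrL).le⟩ ⟨hr0.le, hrL.le⟩ hs2.le
      have h2 : 0 ≤ H s := hHnonneg s ⟨hs1.le, ((hs2.trans hrL)).le⟩
      linarith
    rw [hur, hwr, hΦ0, intervalIntegral.integral_same]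
    constructor <;> simp
  · -- main case : 0 < H r
    set S := {x : ℝ | x ∈ Set.Icc 0 r ∧ 0 < H x} with hSdef
    have hrS : r ∈ S := ⟨⟨hr0.le, le_rfl⟩, hHr⟩
    have hSbd : BddBelow S := ⟨0, fun x hx => hx.1.1⟩
    set r₀ := sInf S with hr₀def
    have hr₀mem : r₀ ∈ Set.Icc 0 r :=
      ⟨le_csInf ⟨r, hrS⟩ (fun x hx => hx.1.1), csInf_le hSbd hrS⟩
    have hr₀L : r₀ < L := lt_of_le_of_lt hr₀mem.2 hrL
    have hHposgt : ∀ s : ℝ, r₀ < s → s ≤ r → 0 < H s := by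
      intro s h1 h2
      obtain ⟨x, hxS, hxlt⟩ := exists_lt_of_csInf_lt ⟨r, hrS⟩ h1
      exact lt_of_lt_of_le hxS.2
        (hHmono ⟨hxS.1.1, hxS.1.2.trans hrL.le⟩ ⟨hxS.1.1.trans hxlt.le, h2.trans hrL.le⟩ hxlt.le)
    have hHr₀ : H r₀ = 0 := by
      rcases eq_or_lt_of_le hr₀mem.1 with h0 | h0
      · rw [← h0]; exact hH0
      · have hzero : ∀ x : ℝ, 0 < x → x < r₀ → H x = 0 := by
          intro x h1 h2
          have hnot : x ∉ S := fun hx => absurd (csInf_le hSbd hx) (not_le.2 h2)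
          have h3 : ¬ 0 < H x := fun hp => hnot ⟨⟨h1.le, h2.le.trans hr₀mem.2⟩, hp⟩
          exact le_antisymm (not_lt.1 h3) (hHnonneg x ⟨h1.le, (h2.trans hr₀L).le⟩)
        have hne : (𝓝[Set.Ioo 0 r₀] r₀).NeBot := right_nhdsWithin_Ioo_neBot h0
        have ht1 : Tendsto H (𝓝[Set.Ioo 0 r₀] r₀) (𝓝 (H r₀)) :=
          ((hHcont r₀ ⟨hr₀mem.1, hr₀L.le⟩).mono
            (fun x hx => ⟨hx.1.le, hx.2.le.trans hr₀L.le⟩) :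
            ContinuousWithinAt H (Set.Ioo 0 r₀) r₀)
        have ht2 : Tendsto H (𝓝[Set.Ioo 0 r₀] r₀) (𝓝 0) := by
          apply tendsto_nhdsWithin_congr (fun x hx => (hzero x hx.1 hx.2).symm)
          exact tendsto_const_nhds
        exact tendsto_nhds_unique ht1 ht2
    have hr₀r : r₀ < r := by
      rcases eq_or_lt_of_le hr₀mem.2 with he | hlt
      · exfalso; rw [he] at hHr₀; linarith
      · exact hlt
    have hur₀ : u r₀ = 0 := by
      rcases eq_or_lt_of_le hr₀mem.1 with h0 | h0
      · rw [← h0]; exact hw'0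
      · exact hu0 r₀ h0 hr₀L hHr₀
    have hwr₀ : w r₀ = w 0 := by
      apply hconst r₀ ⟨hr₀mem.1, hr₀L.le⟩
      intro s h1 h2
      apply hu0 s h1 (h2.trans hr₀L)
      have ha : H s ≤ H r₀ := hHmono ⟨h1.le, (h2.trans hr₀L).le⟩ ⟨hr₀mem.1, hr₀L.le⟩ h2.le
      have hb : 0 ≤ H s := hHnonneg s ⟨h1.le, (h2.trans hr₀L).le⟩
      linarith
    have hwsm : StrictMonoOn w (Set.Icc r₀ r) := by
      apply strictMonoOn_of_deriv_pos (convex_Icc _ _)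
        (hwc.mono (Set.Icc_subset_Icc hr₀mem.1 hrL.le))
      rw [interior_Icc]; intro x hx
      have hx0 : 0 < x := lt_of_le_of_lt hr₀mem.1 hx.1
      have hxL : x < L := hx.2.trans hrL
      rw [(hwd x hx0 hxL).deriv]
      exact hupos x hx0 hxL (hHposgt x hx.1 hx.2.le)
    have hw0le : w 0 ≤ w r := hwmono h0L ⟨hr0.le, hrL.le⟩ hr0.le
    have hwspos : ∀ s : ℝ, r₀ < s → s ≤ r → 0 < w s := by
      intro s h1 h2
      have ha := hwsm ⟨le_rfl, hr₀r.le⟩ ⟨h1.le, h2⟩ h1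
      have hb : 0 ≤ w r₀ := hw_nonneg r₀ ⟨hr₀mem.1, hr₀L.le⟩
      linarith
    have key : ∀ s ∈ Set.Ioo r₀ r, ∃ d₁ d₂ : ℝ,
        HasDerivAt (fun x => Φ (u x)) d₁ s ∧
        HasDerivAt (fun x => ∫ t in (w 0)..(w x), g t) d₂ s ∧
        0 ≤ d₂ ∧ (c / (m₁ * (N:ℝ))) * d₂ ≤ d₁ ∧ d₁ ≤ (c / l₁) * d₂ := by
      rintro s ⟨hs1, hs2⟩
      have hs0 : 0 < s := lt_of_le_of_lt hr₀mem.1 hs1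
      have hsL : s < L := hs2.trans hrL
      have hsIcc : s ∈ Set.Icc (0:ℝ) L := ⟨hs0.le, hsL.le⟩
      have hsn : (0:ℝ) < s ^ n := pow_pos hs0 n
      have hHs : 0 < H s := hHposgt s hs1 hs2.le
      have ht₀ : 0 < u s := hupos s hs0 hsL hHs
      have hws : 0 < w s := hwspos s hs1 hs2.le
      have hw0s : w 0 ≤ w s := hwmono h0L hsIcc hs0.le
      have hw0nn : (0:ℝ) ≤ w 0 := hw_nonneg 0 h0L
      -- derivative of x ↦ ∫_{w 0}^{w x} g
      have hgint : IntervalIntegrable g volume (w 0) (w s) := by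
        apply (hg_cont.mono ?_).intervalIntegrable
        rw [uIcc_of_le hw0s]
        exact fun x hx => le_trans hw0nn hx.1
      have hgmeas : StronglyMeasurableAtFilter g (𝓝 (w s)) :=
        ContinuousOn.stronglyMeasurableAtFilter isOpen_Ioi
          (hg_cont.mono Set.Ioi_subset_Ici_self) (w s) hws
      have hgca : ContinuousAt g (w s) :=
        (hg_cont (w s) hws.le).continuousAt
          (mem_of_superset (Ioi_mem_nhds hws) Set.Ioi_subset_Ici_self)
      have hGy : HasDerivAt (fun y => ∫ t in (w 0)..y, g t) (g (w s)) (w s) :=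
        intervalIntegral.integral_hasDerivAt_right hgint hgmeas hgca
      have hd₂ : HasDerivAt (fun x => ∫ t in (w 0)..(w x), g t) (g (w s) * u s) s :=
        hGy.comp s (hwd s hs0 hsL)
      have hgws : 0 ≤ g (w s) := hg_nonneg _ (hw_nonneg s hsIcc)
      -- derivative of x ↦ c * H x / x ^ n
      have hDden : HasDerivAt (fun x : ℝ => x ^ n) ((n:ℝ) * s ^ (n-1)) s := hasDerivAt_pow n s
      have hDnum : HasDerivAt (fun x => c * H x) (c * (s ^ n * g (w s))) s :=
        (hH' s hs0 hsL).const_mul c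
      set D' := (c * (s ^ n * g (w s)) * s ^ n - c * H s * ((n:ℝ) * s ^ (n-1))) / (s ^ n) ^ 2
        with hD'def
      have hD : HasDerivAt (fun x => c * H x / x ^ n) D' s := hDnum.div hDden hsn.ne'
      -- integral bound : H s ≤ g (w s) * (s^(n+1)/(n+1))
      have hHble : H s ≤ g (w s) * (s ^ (n+1) / ((n:ℝ)+1)) := by
        have hint2 : IntervalIntegrable (fun t : ℝ => t ^ n * g (w s)) volume 0 s :=
          (((continuous_pow n).mul continuous_const).intervalIntegrable 0 s)
        have hmono_int : (∫ t in (0:ℝ)..s, t ^ n * g (w t)) ≤ ∫ t in (0:ℝ)..s, t ^ n * g (w s) := by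
          apply intervalIntegral.integral_mono_on hs0.le (hHint 0 s h0L hsIcc) hint2
          intro t ht
          have htIcc : t ∈ Set.Icc (0:ℝ) L := ⟨ht.1, ht.2.trans hsL.le⟩
          exact mul_le_mul_of_nonneg_left
            (hg_mono (hw_nonneg t htIcc) (hw_nonneg s hsIcc) (hwmono htIcc hsIcc ht.2))
            (pow_nonneg ht.1 n)
        calc H s ≤ ∫ t in (0:ℝ)..s, t ^ n * g (w s) := hmono_int
          _ = g (w s) * (s ^ (n+1) / ((n:ℝ)+1)) := by
              rw [intervalIntegral.integral_mul_const, integral_pow]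
              rw [zero_pow (Nat.succ_ne_zero n)]
              push_cast
              ring
      have hHsnn : 0 ≤ H s := hHs.le
      have hD'le : D' ≤ c * g (w s) := by
        rw [hD'def, div_le_iff₀ (by positivity)]
        have h1 : 0 ≤ c * H s * ((n:ℝ) * s ^ (n-1)) := by positivity
        nlinarith [h1]
      have hD'ge : c / (N:ℝ) * g (w s) ≤ D' := by
        have hkey : (c * H s) * ((n:ℝ) * s ^ (n-1)) * ((n:ℝ)+1) ≤
            c * ((n:ℝ) * (g (w s) * (s ^ n) ^ 2)) := by
          rcases Nat.eq_zero_or_pos n with h0 | h0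
          · simp [h0]
          · have h3 : s ^ (n+1) * s ^ (n-1) = (s ^ n) ^ 2 := by
              rw [← pow_add]
              have : n + 1 + (n - 1) = 2 * n := by omega
              rw [this, pow_mul']
            have h2 : H s * ((n:ℝ)+1) ≤ g (w s) * s ^ (n+1) := by
              have hnp : (0:ℝ) < (n:ℝ) + 1 := by positivity
              calc H s * ((n:ℝ)+1) ≤ (g (w s) * (s ^ (n+1) / ((n:ℝ)+1))) * ((n:ℝ)+1) := by
                    exact mul_le_mul_of_nonneg_right hHble hnp.le
                _ = g (w s) * s ^ (n+1) := by field_simp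
            have hsn1 : (0:ℝ) ≤ s ^ (n-1) := (pow_pos hs0 _).le
            have hnn : (0:ℝ) ≤ (n:ℝ) := Nat.cast_nonneg n
            calc (c * H s) * ((n:ℝ) * s ^ (n-1)) * ((n:ℝ)+1)
                = (c * (n:ℝ) * s ^ (n-1)) * (H s * ((n:ℝ)+1)) := by ring
              _ ≤ (c * (n:ℝ) * s ^ (n-1)) * (g (w s) * s ^ (n+1)) := by
                    apply mul_le_mul_of_nonneg_left h2 (by positivity)
              _ = c * ((n:ℝ) * (g (w s) * (s ^ (n+1) * s ^ (n-1)))) := by ring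
              _ = c * ((n:ℝ) * (g (w s) * (s ^ n) ^ 2)) := by rw [h3]
        rw [hD'def, le_div_iff₀ (by positivity), ← hNR]
        have hnp : (0:ℝ) < (n:ℝ) + 1 := by positivity
        rw [div_mul_eq_mul_div, div_mul_eq_mul_div, div_le_iff₀ hnp]
        nlinarith [hkey]
      have hD'nn : 0 ≤ D' := le_trans (by positivity) hD'ge
      -- inverse function part
      have hφct : ContDiffAt ℝ 1 φ (u s) := hφC1.contDiffAt (Ioi_mem_nhds ht₀)
      have hhct : ContDiffAt ℝ 1 (fun t => φ t * t) (u s) := hφct.mul contDiffAt_id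
      have hstrict : HasStrictDerivAt (fun t => φ t * t)
          (deriv (fun t => φ t * t) (u s)) (u s) := hhct.hasStrictDerivAt one_ne_zero
      set Q := deriv (fun t : ℝ => φ t * t) (u s) with hQdef
      have hQpos : 0 < Q := hφ1 (u s) ht₀
      have hQne : Q ≠ 0 := hQpos.ne'
      set li := hstrict.localInverse (fun t => φ t * t) Q (u s) hQne with hlidef
      have hliD : HasStrictDerivAt li Q⁻¹ (φ (u s) * (u s)) := hstrict.to_localInverse hQne
      have hleft : ∀ᶠ y in 𝓝 (u s), li (φ y * y) = y :=
        (hstrict.hasStrictFDerivAt_equiv hQne).eventually_left_inverse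
      have hucontat : ContinuousAt u s := (hucont s hsIcc).continuousAt (hmem_nhds s hs0 hsL)
      have hueq : ∀ᶠ x in 𝓝 s, li (c * H x / x ^ n) = u x := by
        have h1 : ∀ᶠ x in 𝓝 s, li (φ (u x) * u x) = u x := hucontat.eventually hleft
        have h2 : ∀ᶠ x in 𝓝 s, 0 < u x := hucontat.eventually (eventually_gt_nhds ht₀)
        have h3 : ∀ᶠ x in 𝓝 s, 0 < x ∧ x < L :=
          (eventually_gt_nhds hs0).and (eventually_lt_nhds hsL)
        filter_upwards [h1, h2, h3] with x hx1 hx2 hx3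
        rw [← hode x hx3.1 hx3.2, hhdef (u x) hx2]
        exact hx1
      have hpt : c * H s / s ^ n = φ (u s) * (u s) := by
        rw [← hode s hs0 hsL, hhdef (u s) ht₀]
      have hliDA : HasDerivAt li Q⁻¹ (c * H s / s ^ n) := by
        rw [hpt]; exact hliD.hasDerivAt
      have hlipt : li (c * H s / s ^ n) = u s := by
        rw [hpt]; exact hleft.self_of_nhds
      have hΦt : HasDerivAt Φ (φ (u s) * (u s)) (u s) := hΦderiv (u s) ht₀
      have hcomp1 : HasDerivAt (fun x => li (c * H x / x ^ n)) (Q⁻¹ * D') s := hliDA.comp s hD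
      have hΦt' : HasDerivAt Φ (φ (u s) * (u s)) (li (c * H s / s ^ n)) := by
        rw [hlipt]; exact hΦt
      have hcomp2 : HasDerivAt (fun x => Φ (li (c * H x / x ^ n)))
          ((φ (u s) * (u s)) * (Q⁻¹ * D')) s := hΦt'.comp s hcomp1
      have hd₁ : HasDerivAt (fun x => Φ (u x)) ((φ (u s) * (u s)) * (Q⁻¹ * D')) s := by
        apply hcomp2.congr_of_eventuallyEq
        filter_upwards [hueq] with x hx
        rw [hx]
      -- the bounds
      have hPpos : 0 < φ (u s) * (u s) := mul_pos (hφpos (u s) ht₀) ht₀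
      have hQt1 : l₁ * (φ (u s) * (u s)) ≤ Q * (u s) := (le_div_iff₀ hPpos).1 (hφ3 (u s) ht₀).1
      have hQt2 : Q * (u s) ≤ m₁ * (φ (u s) * (u s)) := (div_le_iff₀ hPpos).1 (hφ3 (u s) ht₀).2
      have hQinv : 0 < Q⁻¹ := inv_pos.2 hQpos
      have hQQ : Q * Q⁻¹ = 1 := mul_inv_cancel₀ hQne
      have hPR1 : u s / m₁ ≤ (φ (u s) * (u s)) * Q⁻¹ := by
        rw [div_le_iff₀ hm₁]
        calc u s = (Q * (u s)) * Q⁻¹ := by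
              rw [mul_comm Q (u s), mul_assoc, hQQ, mul_one]
          _ ≤ (m₁ * (φ (u s) * (u s))) * Q⁻¹ := mul_le_mul_of_nonneg_right hQt2 hQinv.le
          _ = (φ (u s) * (u s)) * Q⁻¹ * m₁ := by ring
      have hPR2 : (φ (u s) * (u s)) * Q⁻¹ ≤ u s / l₁ := by
        rw [le_div_iff₀ hl₁]
        calc (φ (u s) * (u s)) * Q⁻¹ * l₁ = (l₁ * (φ (u s) * (u s))) * Q⁻¹ := by ring
          _ ≤ (Q * (u s)) * Q⁻¹ := mul_le_mul_of_nonneg_right hQt1 hQinv.le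
          _ = u s := by rw [mul_comm Q (u s), mul_assoc, hQQ, mul_one]
      have hgd2 : 0 ≤ c / (N:ℝ) * g (w s) := by positivity
      refine ⟨_, _, hd₁, hd₂, mul_nonneg hgws ht₀.le, ?_, ?_⟩
      · calc c / (m₁ * (N:ℝ)) * (g (w s) * u s)
            = (u s / m₁) * (c / (N:ℝ) * g (w s)) := by
              field_simp
          _ ≤ ((φ (u s) * (u s)) * Q⁻¹) * (c / (N:ℝ) * g (w s)) :=
              mul_le_mul_of_nonneg_right hPR1 hgd2
          _ ≤ ((φ (u s) * (u s)) * Q⁻¹) * D' :=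
              mul_le_mul_of_nonneg_left hD'ge (by positivity)
          _ = (φ (u s) * (u s)) * (Q⁻¹ * D') := by ring
      · calc (φ (u s) * (u s)) * (Q⁻¹ * D') = ((φ (u s) * (u s)) * Q⁻¹) * D' := by ring
          _ ≤ (u s / l₁) * D' := mul_le_mul_of_nonneg_right hPR2 hD'nn
          _ ≤ (u s / l₁) * (c * g (w s)) :=
              mul_le_mul_of_nonneg_left hD'le (by positivity)
          _ = c / l₁ * (g (w s) * u s) := by
              field_simp
    have hIccsub : Set.Icc r₀ r ⊆ Set.Icc (0:ℝ) L := Set.Icc_subset_Icc hr₀mem.1 hrL.le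
    have hcΦu : ContinuousOn (fun x => Φ (u x)) (Set.Icc r₀ r) := by
      obtain ⟨M, hMmem, hMmax⟩ := IsCompact.exists_isMaxOn isCompact_Icc
        ⟨r₀, le_rfl, hr₀r.le⟩ (hucont.mono hIccsub)
      have hMnn : 0 ≤ u M := hw'_nonneg M ⟨(hIccsub hMmem).1, lt_of_le_of_lt hMmem.2 hrL⟩
      apply (hΦcont (u M) hMnn).comp (hucont.mono hIccsub)
      intro x hx
      exact ⟨hw'_nonneg x ⟨(hIccsub hx).1, lt_of_le_of_lt hx.2 hrL⟩, hMmax hx⟩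
    have hcG : ContinuousOn (fun x => ∫ t in (w 0)..(w x), g t) (Set.Icc r₀ r) := by
      have hint : IntervalIntegrable g volume (w 0) (w r) := by
        apply (hg_cont.mono ?_).intervalIntegrable
        rw [uIcc_of_le hw0le]
        exact fun x hx => le_trans (hw_nonneg 0 h0L) hx.1
      have h1 := intervalIntegral.continuousOn_primitive_interval' hint
        (by rw [uIcc_of_le hw0le]; exact ⟨le_rfl, hw0le⟩)
      rw [uIcc_of_le hw0le] at h1
      apply h1.comp (hwc.mono hIccsub)
      intro x hx
      exact ⟨hwmono h0L (hIccsub hx) (hIccsub hx).1,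
        hwmono (hIccsub hx) ⟨hr0.le, hrL.le⟩ hx.2⟩
    have hB0 : (∫ t in (w 0)..(w r₀), g t) = 0 := by
      rw [hwr₀]; exact intervalIntegral.integral_same
    have hΦur₀ : Φ (u r₀) = 0 := by rw [hur₀, hΦ0]
    constructor
    · have hmono : MonotoneOn
          (fun x => Φ (u x) - c / (m₁ * (N:ℝ)) * ∫ t in (w 0)..(w x), g t)
          (Set.Icc r₀ r) := by
        apply monotoneOn_of_deriv_nonneg (convex_Icc _ _) (hcΦu.sub (continuousOn_const.mul hcG))
        · rw [interior_Icc]; intro x hx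
          obtain ⟨d₁, d₂, h1, h2, h3, h4, h5⟩ := key x hx
          exact ((h1.sub (h2.const_mul _)).differentiableAt).differentiableWithinAt
        · rw [interior_Icc]; intro x hx
          obtain ⟨d₁, d₂, h1, h2, h3, h4, h5⟩ := key x hx
          have hd : HasDerivAt ((fun x => Φ (u x)) - (fun x => c / (m₁ * (N:ℝ))) *
              fun x => ∫ t in (w 0)..(w x), g t) (d₁ - c / (m₁ * (N:ℝ)) * d₂) x :=
            h1.sub (h2.const_mul _)
          rw [hd.deriv]
          linarith
      have hle := hmono ⟨le_rfl, hr₀r.le⟩ ⟨hr₀r.le, le_rfl⟩ hr₀r.le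
      simp only [hΦur₀, hB0] at hle
      linarith
    · have hmono : MonotoneOn
          (fun x => (c / l₁ * ∫ t in (w 0)..(w x), g t) - Φ (u x))
          (Set.Icc r₀ r) := by
        apply monotoneOn_of_deriv_nonneg (convex_Icc _ _) ((continuousOn_const.mul hcG).sub hcΦu)
        · rw [interior_Icc]; intro x hx
          obtain ⟨d₁, d₂, h1, h2, h3, h4, h5⟩ := key x hx
          exact (((h2.const_mul _).sub h1).differentiableAt).differentiableWithinAt
        · rw [interior_Icc]; intro x hx
          obtain ⟨d₁, d₂, h1, h2, h3, h4, h5⟩ := key x hx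
          have hd : HasDerivAt (((fun x => c / l₁) * fun x => ∫ t in (w 0)..(w x), g t) -
              fun x => Φ (u x)) (c / l₁ * d₂ - d₁) x :=
            (h2.const_mul _).sub h1
          rw [hd.deriv]
          linarith
      have hle := hmono ⟨le_rfl, hr₀r.le⟩ ⟨hr₀r.le, le_rfl⟩ hr₀r.le
      simp only [hΦur₀, hB0] at hle
      linarith
end

section
/- Let φ : (0,∞) → (0,∞) be a C¹ function satisfying (φ₁) and (φ₂), with Φ⁻¹ the inverse of Φ on [0,∞). Let f : [0,∞) → [0,∞) be continuous with f(0) = 0 and f(s) > 0 for s > 0, and suppose liminf_{s→∞} (inf{f(t) : t ≥ s})/f(s) > 0 and ∫₁^∞ dt/Φ⁻¹(F(t)) < ∞, where F(t) = ∫₀^t f(s) ds. Define f̲(t) = inf{f(s) : s ≥ t} and F̲(t) = ∫₀^t f̲(s) ds. Then f̲(t) > 0 for all t > 0 and ∫₁^∞ dt/Φ⁻¹(F̲(t)) < ∞, i.e. f̲ also satisfies the φ-Keller–Osserman condition. -/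
open MeasureTheory Real Set Filter

section PhiMachine
variable (φ Φ : ℝ → ℝ) (l : ℝ)
  (hφC : ContinuousOn (fun s => φ s * s) (Set.Ioi 0))
  (hφpos : ∀ t > (0:ℝ), 0 < φ t)
  (hΦ : ∀ t : ℝ, Φ t = ∫ s in (0:ℝ)..|t|, φ s * s)
  (hl : 1 < l)
  (hφ2 : ∀ t > (0:ℝ), l ≤ φ t * t ^ 2 / Φ t)

include hl hφpos hφ2 in
lemma Phi_pos : ∀ t > (0:ℝ), 0 < Φ t := by
  intro t ht
  by_contra h
  push_neg at h
  have h2 := hφ2 t ht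
  have hnum : 0 < φ t * t ^ 2 := mul_pos (hφpos t ht) (by positivity)
  rcases lt_or_eq_of_le h with h | h
  · have : φ t * t ^ 2 / Φ t < 0 := div_neg_of_pos_of_neg hnum h
    linarith
  · rw [h, div_zero] at h2; linarith

include hl hφpos hΦ hφ2 in
lemma Phi_intble : ∀ t > (0:ℝ), IntervalIntegrable (fun s => φ s * s) volume 0 t := by
  intro t ht
  by_contra h
  have := intervalIntegral.integral_undef h
  have h0 : Φ t = 0 := by rw [hΦ t, abs_of_pos ht, this]
  have := Phi_pos φ Φ l hφpos hl hφ2 t ht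
  linarith

include hl hφpos hΦ hφ2 in
lemma Phi_sub : ∀ a ≥ (0:ℝ), ∀ b ≥ a, Φ b = Φ a + ∫ s in a..b, φ s * s := by
  intro a ha b hb
  have hΦ0 : Φ 0 = 0 := by rw [hΦ 0, abs_zero, intervalIntegral.integral_same]
  rcases eq_or_lt_of_le (ha.trans hb) with hb0 | hb0
  · have ha0 : a = 0 := le_antisymm (hb0 ▸ hb : a ≤ 0) ha
    rw [← hb0, ha0, hΦ0, intervalIntegral.integral_same]; ring
  · rcases eq_or_lt_of_le ha with ha0 | ha0
    · subst ha0; rw [hΦ0, hΦ b, abs_of_pos hb0]; ring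
    · have h1 := Phi_intble φ Φ l hφpos hΦ hl hφ2 a ha0
      have h2 := (Phi_intble φ Φ l hφpos hΦ hl hφ2 b hb0).mono_set
        (by rw [Set.uIcc_of_le hb, Set.uIcc_of_le (ha.trans hb)]; exact Set.Icc_subset_Icc_left ha
          : Set.uIcc a b ⊆ Set.uIcc 0 b)
      rw [hΦ b, abs_of_pos hb0, hΦ a, abs_of_pos ha0,
        ← intervalIntegral.integral_add_adjacent_intervals h1 h2]

include hl hφpos hΦ hφ2 in
lemma Phi_mono : ∀ a ≥ (0:ℝ), ∀ b ≥ a, Φ a ≤ Φ b := by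
  intro a ha b hb
  rw [Phi_sub φ Φ l hφpos hΦ hl hφ2 a ha b hb]
  have : 0 ≤ ∫ s in a..b, φ s * s := by
    apply intervalIntegral.integral_nonneg hb
    intro s hs
    rcases eq_or_lt_of_le (ha.trans hs.1) with h | h
    · rw [← h]; simp
    · exact le_of_lt (by have := hφpos s h; positivity)
  linarith

include hφC hl hφpos hΦ hφ2 in
lemma Phi_deriv : ∀ t > (0:ℝ), HasDerivAt Φ (φ t * t) t := by
  intro t ht
  have ht2 : (0:ℝ) < t / 2 := by linarith
  set a := t / 2 with ha
  have key : ∀ x > (0:ℝ), Φ x = Φ a + ∫ s in a..x, φ s * s := by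
    intro x hx
    rcases le_total a x with h | h
    · exact Phi_sub φ Φ l hφpos hΦ hl hφ2 a ht2.le x h
    · have := Phi_sub φ Φ l hφpos hΦ hl hφ2 x hx.le a h
      rw [intervalIntegral.integral_symm]
      rw [this]; ring
  have hev : Φ =ᶠ[nhds t] fun x => Φ a + ∫ s in a..x, φ s * s := by
    filter_upwards [eventually_gt_nhds ht] with x hx using key x hx
  have hint : IntervalIntegrable (fun s => φ s * s) volume a t := by
    apply (Phi_intble φ Φ l hφpos hΦ hl hφ2 t ht).mono_set
    rw [Set.uIcc_of_le (by linarith : a ≤ t), Set.uIcc_of_le ht.le]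
    exact Set.Icc_subset_Icc_left ht2.le
  have hmeas : StronglyMeasurableAtFilter (fun s => φ s * s) (nhds t) volume :=
    hφC.stronglyMeasurableAtFilter isOpen_Ioi t ht
  have hcont : ContinuousAt (fun s => φ s * s) t :=
    hφC.continuousAt (Ioi_mem_nhds ht)
  have hd := (intervalIntegral.integral_hasDerivAt_right hint hmeas hcont).const_add (Φ a)
  exact (hd.congr_of_eventuallyEq hev)

include hφC hl hφpos hΦ hφ2 in
lemma Phi_scale : ∀ x ≥ (0:ℝ), ∀ δ : ℝ, 0 < δ → δ ≤ 1 → Φ (δ * x) ≤ δ ^ l * Φ x := by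
  intro x hx δ hδ hδ1
  rcases eq_or_lt_of_le hx with hx0 | hx0
  · rw [← hx0, mul_zero]
    rw [hΦ 0, abs_zero, intervalIntegral.integral_same]
    positivity
  · set ψ : ℝ → ℝ := fun t => Φ t * t ^ (-l) with hψ
    have hderiv : ∀ t ∈ Set.Ioi (0:ℝ), HasDerivAt ψ
        (φ t * t * t ^ (-l) + Φ t * (-l * t ^ (-l - 1))) t := by
      intro t ht
      exact (Phi_deriv φ Φ l hφC hφpos hΦ hl hφ2 t ht).mul
        (Real.hasDerivAt_rpow_const (Or.inl (ne_of_gt ht)))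
    have hmono : MonotoneOn ψ (Set.Ioi 0) := by
      apply monotoneOn_of_deriv_nonneg (convex_Ioi 0)
      · intro t ht
        exact (hderiv t ht).continuousAt.continuousWithinAt
      · rw [interior_Ioi]
        intro t ht
        exact (hderiv t ht).differentiableAt.differentiableWithinAt
      · rw [interior_Ioi]
        intro t ht
        rw [(hderiv t ht).deriv]
        have htpos : (0:ℝ) < t := ht
        have hΦt : 0 < Φ t := Phi_pos φ Φ l hφpos hl hφ2 t ht
        have h2 : l * Φ t ≤ φ t * t ^ 2 := by
          have := hφ2 t ht
          calc l * Φ t ≤ (φ t * t ^ 2 / Φ t) * Φ t := by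
                apply mul_le_mul_of_nonneg_right this hΦt.le
            _ = φ t * t ^ 2 := by field_simp
        have hre : φ t * t * t ^ (-l) + Φ t * (-l * t ^ (-l - 1))
            = (φ t * t ^ 2 - l * Φ t) * t ^ (-l - 1) := by
          have h1 : t ^ (-l) = t * t ^ (-l - 1) := by
            have e : -l = 1 + (-l - 1) := by ring
            rw [e, Real.rpow_add htpos, Real.rpow_one]
            norm_num
          rw [h1]; ring
        rw [hre]
        have : (0:ℝ) < t ^ (-l - 1) := Real.rpow_pos_of_pos htpos _
        nlinarith
    have hδx : (0:ℝ) < δ * x := by positivity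
    have := hmono (Set.mem_Ioi.mpr hδx) (Set.mem_Ioi.mpr hx0)
      (by nlinarith : δ * x ≤ x)
    have hxl : (0:ℝ) < x ^ l := Real.rpow_pos_of_pos hx0 _
    have hδxl : (0:ℝ) < (δ * x) ^ l := Real.rpow_pos_of_pos hδx _
    have hψd : ψ (δ * x) = Φ (δ * x) / (δ * x) ^ l := by
      rw [hψ]; simp only []
      rw [Real.rpow_neg hδx.le, div_eq_mul_inv]
    have hψx : ψ x = Φ x / x ^ l := by
      rw [hψ]; simp only []
      rw [Real.rpow_neg hx0.le, div_eq_mul_inv]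
    rw [hψd, hψx, div_le_div_iff₀ hδxl hxl] at this
    have hmul : (δ * x) ^ l = δ ^ l * x ^ l := Real.mul_rpow hδ.le hx0.le
    rw [hmul] at this
    nlinarith [this, hxl]

end PhiMachine

/-- under (φ₁)-(φ₂), if f is continuous, f(0) = 0, f > 0 on (0,∞),
liminf_{s→∞} (inf{f(t) : t ≥ s})/f(s) > 0 and f satisfies the φ-Keller–Osserman
condition ∫₁^∞ dt/Φ⁻¹(F(t)) < ∞, then f̲(t) = inf{f(s) : s ≥ t} is positive on (0,∞)
and also satisfies the φ-Keller–Osserman condition. -/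
theorem stmt10
    (φ Φ Φinv : ℝ → ℝ) (l m : ℝ)
    (hφC1 : ContDiffOn ℝ 1 φ (Set.Ioi 0))
    (hφpos : ∀ t > (0:ℝ), 0 < φ t)
    (hΦ : ∀ t : ℝ, Φ t = ∫ s in (0:ℝ)..|t|, φ s * s)
    (hφ1 : ∀ t > (0:ℝ), 0 < deriv (fun s => φ s * s) t)
    (hl : 1 < l) (hm : 1 < m)
    (hφ2 : ∀ t > (0:ℝ), l ≤ φ t * t ^ 2 / Φ t ∧ φ t * t ^ 2 / Φ t ≤ m)
    (hΦinv_nonneg : ∀ t ≥ (0:ℝ), 0 ≤ Φinv t)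
    (hΦinv_left : ∀ t ≥ (0:ℝ), Φinv (Φ t) = t)
    (hΦinv_right : ∀ t ≥ (0:ℝ), Φ (Φinv t) = t)
    (f : ℝ → ℝ)
    (hf_cont : ContinuousOn f (Set.Ici 0))
    (hf0 : f 0 = 0)
    (hf_pos : ∀ s > (0:ℝ), 0 < f s)
    (hf_liminf : 0 < Filter.liminf (fun s => sInf (f '' Set.Ici s) / f s) Filter.atTop)
    (hKO : IntegrableOn (fun t => 1 / Φinv (∫ s in (0:ℝ)..t, f s)) (Set.Ioi 1)) :
    (∀ t > (0:ℝ), 0 < sInf (f '' Set.Ici t)) ∧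
    IntegrableOn (fun t => 1 / Φinv (∫ s in (0:ℝ)..t, sInf (f '' Set.Ici s))) (Set.Ioi 1) := by
  have hφ2l : ∀ t > (0:ℝ), l ≤ φ t * t ^ 2 / Φ t := fun t ht => (hφ2 t ht).1
  have hφC : ContinuousOn (fun s => φ s * s) (Set.Ioi 0) :=
    (hφC1.continuousOn).mul continuousOn_id
  set fl : ℝ → ℝ := fun s => sInf (f '' Set.Ici s) with hfl_def
  -- basic facts about f and fl
  have hf_nonneg : ∀ s ≥ (0:ℝ), 0 ≤ f s := by
    intro s hs
    rcases eq_or_lt_of_le hs with h | h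
    · rw [← h, hf0]
    · exact (hf_pos s h).le
  have hne : ∀ t : ℝ, (f '' Set.Ici t).Nonempty :=
    fun t => ⟨f t, Set.mem_image_of_mem f (Set.mem_Ici.mpr le_rfl)⟩
  have hbdd : ∀ t ≥ (0:ℝ), BddBelow (f '' Set.Ici t) := by
    intro t ht
    refine ⟨0, ?_⟩
    rintro y ⟨s, hs, rfl⟩
    exact hf_nonneg s (ht.trans hs)
  have hfl_nonneg : ∀ t ≥ (0:ℝ), 0 ≤ fl t := by
    intro t ht
    refine le_csInf (hne t) ?_
    rintro y ⟨s, hs, rfl⟩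
    exact hf_nonneg s (ht.trans hs)
  have hfl_lb : ∀ t ≥ (0:ℝ), ∀ s ≥ t, fl t ≤ f s := by
    intro t ht s hs
    exact csInf_le (hbdd t ht) ⟨s, hs, rfl⟩
  have hfl_le : ∀ t ≥ (0:ℝ), fl t ≤ f t := fun t ht => hfl_lb t ht t le_rfl
  have hfl_mono : MonotoneOn fl (Set.Ici 0) := by
    intro a ha b hb hab
    exact csInf_le_csInf (hbdd a ha) (hne b) (Set.image_mono (Set.Ici_subset_Ici.mpr hab))
  -- liminf extraction
  have hIsB : Filter.IsBoundedUnder (· ≥ ·) Filter.atTop (fun s => fl s / f s) := by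
    refine ⟨0, ?_⟩
    rw [Filter.eventually_map]
    filter_upwards [Filter.eventually_ge_atTop (1:ℝ)] with s hs
    exact div_nonneg (hfl_nonneg s (by linarith)) (hf_pos s (by linarith)).le
  set c : ℝ := Filter.liminf (fun s => fl s / f s) Filter.atTop / 2 with hc_def
  have hc : 0 < c := half_pos hf_liminf
  have hev : ∀ᶠ s in Filter.atTop, c < fl s / f s := by
    apply Filter.eventually_lt_of_lt_liminf _ hIsB
    rw [hc_def]
    linarith
  rw [Filter.eventually_atTop] at hev
  obtain ⟨s₀', hs₀'⟩ := hev
  set s₀ : ℝ := max s₀' 1 with hs₀_def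
  have hs₀1 : (1:ℝ) ≤ s₀ := le_max_right _ _
  have hs₀pos : (0:ℝ) < s₀ := by linarith
  have hratio : ∀ s ≥ s₀, c < fl s / f s := fun s hs => hs₀' s ((le_max_left _ _).trans hs)
  have hcf : ∀ s ≥ s₀, c * f s ≤ fl s := by
    intro s hs
    have hfs : 0 < f s := hf_pos s (by linarith)
    have := hratio s hs
    rw [lt_div_iff₀ hfs] at this
    linarith
  have hc1 : c ≤ 1 := by
    have h1 := hratio s₀ le_rfl
    have hfs : 0 < f s₀ := hf_pos s₀ hs₀pos
    have h2 : fl s₀ / f s₀ ≤ 1 := div_le_one_of_le₀ (hfl_le s₀ hs₀pos.le) hfs.le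
    linarith
  -- positivity of fl
  have hfls₀ : 0 < fl s₀ := lt_of_lt_of_le (mul_pos hc (hf_pos s₀ hs₀pos)) (hcf s₀ le_rfl)
  have hflpos : ∀ t > (0:ℝ), 0 < fl t := by
    intro t ht
    rcases le_total s₀ t with h | h
    · exact lt_of_lt_of_le hfls₀ (hfl_mono hs₀pos.le (le_trans hs₀pos.le h) h)
    · obtain ⟨x, hx, hmin⟩ := isCompact_Icc.exists_isMinOn (Set.nonempty_Icc.mpr h)
        (hf_cont.mono (fun y hy => le_trans ht.le hy.1 : Set.Icc t s₀ ⊆ Set.Ici 0))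
      have hfx : 0 < f x := hf_pos x (lt_of_lt_of_le ht hx.1)
      have : min (f x) (fl s₀) ≤ fl t := by
        apply le_csInf (hne t)
        rintro y ⟨s, hs, rfl⟩
        rcases le_total s s₀ with h' | h'
        · exact le_trans (min_le_left _ _) (hmin ⟨hs, h'⟩)
        · exact le_trans (min_le_right _ _) (hfl_lb s₀ hs₀pos.le s h')
      exact lt_of_lt_of_le (lt_min hfx hfls₀) this
  refine ⟨hflpos, ?_⟩
  -- integrability machinery
  set F : ℝ → ℝ := fun t => ∫ s in (0:ℝ)..t, f s with hF_def
  set Fl : ℝ → ℝ := fun t => ∫ s in (0:ℝ)..t, fl s with hFl_def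
  have hf_int : ∀ a b : ℝ, 0 ≤ a → a ≤ b → IntervalIntegrable f volume a b := by
    intro a b ha hab
    apply ContinuousOn.intervalIntegrable
    apply hf_cont.mono
    rw [Set.uIcc_of_le hab]
    exact fun y hy => le_trans ha hy.1
  have hfl_int : ∀ a b : ℝ, 0 ≤ a → a ≤ b → IntervalIntegrable fl volume a b := by
    intro a b ha hab
    rw [intervalIntegrable_iff, Set.uIoc_of_le hab]
    apply Integrable.mono' (integrableOn_const (C := fl b) measure_Ioc_lt_top.ne)
    · exact (aemeasurable_restrict_of_monotoneOn measurableSet_Ioc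
        (hfl_mono.mono (fun y hy => le_trans ha hy.1.le))).aestronglyMeasurable
    · filter_upwards [ae_restrict_mem measurableSet_Ioc] with x hx
      have hx0 : (0:ℝ) ≤ x := le_trans ha hx.1.le
      rw [Real.norm_eq_abs, abs_of_nonneg (hfl_nonneg x hx0)]
      exact hfl_mono (Set.mem_Ici.mpr hx0) (Set.mem_Ici.mpr (le_trans hx0 hx.2)) hx.2
  have hF_sub : ∀ a b : ℝ, 0 ≤ a → a ≤ b → F b = F a + ∫ s in a..b, f s := by
    intro a b ha hab
    simp only [hF_def]
    rw [← intervalIntegral.integral_add_adjacent_intervals (hf_int 0 a le_rfl ha)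
      ((hf_int 0 b le_rfl (ha.trans hab)).mono_set
        (by rw [Set.uIcc_of_le hab, Set.uIcc_of_le (ha.trans hab)]
            exact Set.Icc_subset_Icc_left ha))]
  have hFl_sub : ∀ a b : ℝ, 0 ≤ a → a ≤ b → Fl b = Fl a + ∫ s in a..b, fl s := by
    intro a b ha hab
    simp only [hFl_def]
    rw [← intervalIntegral.integral_add_adjacent_intervals (hfl_int 0 a le_rfl ha)
      ((hfl_int 0 b le_rfl (ha.trans hab)).mono_set
        (by rw [Set.uIcc_of_le hab, Set.uIcc_of_le (ha.trans hab)]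
            exact Set.Icc_subset_Icc_left ha))]
  have hF_mono : ∀ a ≥ (0:ℝ), ∀ b ≥ a, F a ≤ F b := by
    intro a ha b hb
    rw [hF_sub a b ha hb]
    have : 0 ≤ ∫ s in a..b, f s :=
      intervalIntegral.integral_nonneg hb (fun s hs => hf_nonneg s (ha.trans hs.1))
    linarith
  have hFl_mono : ∀ a ≥ (0:ℝ), ∀ b ≥ a, Fl a ≤ Fl b := by
    intro a ha b hb
    rw [hFl_sub a b ha hb]
    have : 0 ≤ ∫ s in a..b, fl s :=
      intervalIntegral.integral_nonneg hb (fun s hs => hfl_nonneg s (ha.trans hs.1))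
    linarith
  have hF0 : F 0 = 0 := intervalIntegral.integral_same
  have hFl0 : Fl 0 = 0 := intervalIntegral.integral_same
  have hF_nonneg : ∀ t ≥ (0:ℝ), 0 ≤ F t := fun t ht => hF0 ▸ hF_mono 0 le_rfl t ht
  have hFl_nonneg : ∀ t ≥ (0:ℝ), 0 ≤ Fl t := fun t ht => hFl0 ▸ hFl_mono 0 le_rfl t ht
  -- Fl 1 > 0
  have hFl1 : 0 < Fl 1 := by
    have h1 : Fl 1 = Fl (1/2) + ∫ s in (1/2:ℝ)..1, fl s := hFl_sub (1/2) 1 (by norm_num) (by norm_num)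
    have h2 : fl (1/2) * (1 - 1/2) ≤ ∫ s in (1/2:ℝ)..1, fl s := by
      have := intervalIntegral.integral_mono_on (by norm_num : (1/2:ℝ) ≤ 1)
        (intervalIntegrable_const) (hfl_int (1/2) 1 (by norm_num) (by norm_num))
        (fun x hx => hfl_mono (by norm_num : (1/2:ℝ) ∈ Set.Ici (0:ℝ))
          (le_trans (by norm_num) hx.1 : x ∈ Set.Ici (0:ℝ)) hx.1)
      rwa [intervalIntegral.integral_const, smul_eq_mul, mul_comm] at this
    have h3 : 0 < fl (1/2) := hflpos (1/2) (by norm_num)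
    have h4 : 0 ≤ Fl (1/2) := hFl_nonneg (1/2) (by norm_num)
    nlinarith
  -- key lower bound for Fl
  have hFl_ge : ∀ t ≥ s₀, c * (F t - F s₀) ≤ Fl t := by
    intro t ht
    have h1 : Fl t = Fl s₀ + ∫ s in s₀..t, fl s := hFl_sub s₀ t hs₀pos.le ht
    have h2 : ∫ s in s₀..t, c * f s ≤ ∫ s in s₀..t, fl s := by
      apply intervalIntegral.integral_mono_on ht
        ((hf_int s₀ t hs₀pos.le ht).const_mul c) (hfl_int s₀ t hs₀pos.le ht)
      intro x hx
      exact hcf x hx.1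
    rw [intervalIntegral.integral_const_mul] at h2
    have h3 : F t = F s₀ + ∫ s in s₀..t, f s := hF_sub s₀ t hs₀pos.le ht
    have h4 : 0 ≤ Fl s₀ := hFl_nonneg s₀ hs₀pos.le
    nlinarith
  -- choose T
  set d : ℝ := fl s₀ with hd_def
  set T : ℝ := s₀ + F s₀ / d + 1 with hT_def
  have hdpos : 0 < d := hfls₀
  have hT_gt : s₀ < T := by
    have : 0 ≤ F s₀ / d := div_nonneg (hF_nonneg s₀ hs₀pos.le) hdpos.le
    rw [hT_def]
    linarith
  have hT1 : (1:ℝ) < T := lt_of_le_of_lt hs₀1 hT_gt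
  have hgrow : ∀ t ≥ T, F s₀ ≤ F t - F s₀ := by
    intro t ht
    have hts₀ : s₀ ≤ t := le_trans hT_gt.le ht
    have h3 : F t = F s₀ + ∫ s in s₀..t, f s := hF_sub s₀ t hs₀pos.le hts₀
    have h2 : d * (t - s₀) ≤ ∫ s in s₀..t, f s := by
      have := intervalIntegral.integral_mono_on hts₀ intervalIntegrable_const
        (hf_int s₀ t hs₀pos.le hts₀)
        (fun x hx => hfl_lb s₀ hs₀pos.le x hx.1)
      rwa [intervalIntegral.integral_const, smul_eq_mul, mul_comm] at this
    have h5 : F s₀ ≤ d * (t - s₀) := by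
      have h6 : F s₀ / d + 1 ≤ t - s₀ := by rw [hT_def] at ht; linarith
      have h7 : F s₀ = d * (F s₀ / d) := by field_simp
      nlinarith
    linarith
  have hFl_half : ∀ t ≥ T, c / 2 * F t ≤ Fl t := by
    intro t ht
    have hts₀ : s₀ ≤ t := le_trans hT_gt.le ht
    have h1 := hFl_ge t hts₀
    have h2 := hgrow t ht
    nlinarith
  have hFT_pos : ∀ t ≥ T, 0 < F t := by
    intro t ht
    have h2 := hgrow t ht
    have hts₀ : s₀ ≤ t := le_trans hT_gt.le ht
    have h3 : F t = F s₀ + ∫ s in s₀..t, f s := hF_sub s₀ t hs₀pos.le hts₀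
    have h4 : d * (t - s₀) ≤ ∫ s in s₀..t, f s := by
      have := intervalIntegral.integral_mono_on hts₀ intervalIntegrable_const
        (hf_int s₀ t hs₀pos.le hts₀)
        (fun x hx => hfl_lb s₀ hs₀pos.le x hx.1)
      rwa [intervalIntegral.integral_const, smul_eq_mul, mul_comm] at this
    have h5 : 0 ≤ F s₀ := hF_nonneg s₀ hs₀pos.le
    have ht' : T ≤ t := ht
    nlinarith [hT_gt]
  -- Φinv facts
  have hΦ0 : Φ 0 = 0 := by rw [hΦ 0, abs_zero, intervalIntegral.integral_same]
  have hΦmono := Phi_mono φ Φ l hφpos hΦ hl hφ2l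
  have hΦinv_mono : ∀ a ≥ (0:ℝ), ∀ b ≥ a, Φinv a ≤ Φinv b := by
    intro a ha b hb
    by_contra h
    push_neg at h
    have h1 : Φ (Φinv b) ≤ Φ (Φinv a) := hΦmono (Φinv b) (hΦinv_nonneg b (ha.trans hb)) (Φinv a) h.le
    rw [hΦinv_right a ha, hΦinv_right b (ha.trans hb)] at h1
    have hab : a = b := le_antisymm hb h1
    rw [hab] at h
    exact lt_irrefl _ h
  have hΦinv_pos : ∀ u > (0:ℝ), 0 < Φinv u := by
    intro u hu
    rcases eq_or_lt_of_le (hΦinv_nonneg u hu.le) with h | h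
    · exfalso
      have := hΦinv_right u hu.le
      rw [← h, hΦ0] at this
      linarith
    · exact h
  have hΦnonneg : ∀ t ≥ (0:ℝ), 0 ≤ Φ t := fun t ht => hΦ0 ▸ hΦmono 0 le_rfl t ht
  -- scaling lemma for Φinv
  have hscale : ∀ u ≥ (0:ℝ), ∀ ε : ℝ, 0 < ε → ε ≤ 1 → ε ^ (1/l) * Φinv u ≤ Φinv (ε * u) := by
    intro u hu ε hε hε1
    set δ : ℝ := ε ^ (1/l) with hδ_def
    have hδpos : 0 < δ := Real.rpow_pos_of_pos hε _
    have hδ1 : δ ≤ 1 := Real.rpow_le_one hε.le hε1 (by positivity)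
    have hδl : δ ^ l = ε := by
      rw [hδ_def, ← Real.rpow_mul hε.le, one_div,
        inv_mul_cancel₀ (by linarith : l ≠ 0), Real.rpow_one]
    have hx : 0 ≤ Φinv u := hΦinv_nonneg u hu
    have h1 : Φ (δ * Φinv u) ≤ δ ^ l * Φ (Φinv u) :=
      Phi_scale φ Φ l hφC hφpos hΦ hl hφ2l (Φinv u) hx δ hδpos hδ1
    rw [hΦinv_right u hu, hδl] at h1
    have h2 : Φinv (Φ (δ * Φinv u)) ≤ Φinv (ε * u) :=
      hΦinv_mono (Φ (δ * Φinv u)) (hΦnonneg _ (by positivity)) (ε * u) h1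
    rwa [hΦinv_left (δ * Φinv u) (by positivity)] at h2
  -- the integrand and its antitonicity
  have hg_pos : ∀ t ≥ (1:ℝ), 0 < Φinv (Fl t) := by
    intro t ht
    apply hΦinv_pos
    exact lt_of_lt_of_le hFl1 (hFl_mono 1 (by norm_num) t ht)
  have h_anti : AntitoneOn (fun t => 1 / Φinv (Fl t)) (Set.Ici 1) := by
    intro a ha b hb hab
    have h1 : Φinv (Fl a) ≤ Φinv (Fl b) :=
      hΦinv_mono (Fl a) (hFl_nonneg a (le_trans zero_le_one ha)) (Fl b)
        (hFl_mono a (le_trans zero_le_one ha) b hab)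
    exact one_div_le_one_div_of_le (hg_pos a ha) h1
  -- Part 1 : integrable on Ioc 1 T
  have part1 : IntegrableOn (fun t => 1 / Φinv (Fl t)) (Set.Ioc 1 T) := by
    apply Integrable.mono'
      (integrableOn_const (C := 1 / Φinv (Fl 1)) measure_Ioc_lt_top.ne)
    · exact (aemeasurable_restrict_of_antitoneOn measurableSet_Ioc
        (h_anti.mono (fun y hy => hy.1.le))).aestronglyMeasurable
    · filter_upwards [ae_restrict_mem measurableSet_Ioc] with x hx
      have hx1 : (1:ℝ) ≤ x := hx.1.le
      rw [Real.norm_eq_abs,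
        abs_of_nonneg (le_of_lt (one_div_pos.mpr (hg_pos x hx1)))]
      exact h_anti (Set.mem_Ici.mpr le_rfl) (Set.mem_Ici.mpr hx1) hx1
  -- Part 2 : integrable on Ioi T by domination
  set K : ℝ := (c/2) ^ (1/l) with hK_def
  have hKpos : 0 < K := Real.rpow_pos_of_pos (by linarith) _
  have dom : IntegrableOn (fun t => (1/K) * (1 / Φinv (F t))) (Set.Ioi T) :=
    (hKO.mono_set (Set.Ioi_subset_Ioi hT1.le)).const_mul (1/K)
  have part2 : IntegrableOn (fun t => 1 / Φinv (Fl t)) (Set.Ioi T) := by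
    apply Integrable.mono dom
    · exact (aemeasurable_restrict_of_antitoneOn measurableSet_Ioi
        (h_anti.mono (fun y hy => le_trans hT1.le (le_of_lt hy)))).aestronglyMeasurable
    · filter_upwards [ae_restrict_mem measurableSet_Ioi] with t ht
      have htT : T ≤ t := le_of_lt ht
      have hFt : 0 < F t := hFT_pos t htT
      have h1 : c/2 * F t ≤ Fl t := hFl_half t htT
      have hKΦ : K * Φinv (F t) ≤ Φinv (c/2 * F t) :=
        hscale (F t) hFt.le (c/2) (by linarith) (by linarith)
      have h2 : K * Φinv (F t) ≤ Φinv (Fl t) :=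
        hKΦ.trans (hΦinv_mono (c/2 * F t) (mul_nonneg (by linarith) hFt.le) (Fl t) h1)
      have hpos1 : 0 < Φinv (F t) := hΦinv_pos _ hFt
      have hpos2 : 0 < Φinv (Fl t) := hg_pos t (le_trans hT1.le htT)
      have hKF : 0 < K * Φinv (F t) := mul_pos hKpos hpos1
      rw [Real.norm_eq_abs, Real.norm_eq_abs,
        abs_of_nonneg (le_of_lt (one_div_pos.mpr hpos2)),
        abs_of_nonneg (le_of_lt (mul_pos (one_div_pos.mpr hKpos) (one_div_pos.mpr hpos1)))]
      calc 1 / Φinv (Fl t) ≤ 1 / (K * Φinv (F t)) := one_div_le_one_div_of_le hKF h2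
        _ = 1/K * (1 / Φinv (F t)) := by
            rw [div_mul_div_comm, one_mul]
  have := part1.union part2
  rwa [Set.Ioc_union_Ioi_eq_Ioi hT1.le] at this
end

section
/- Let φ : (0,∞) → (0,∞) be a C¹ function satisfying (φ₁) and (φ₂), with Φ⁻¹ the inverse of Φ on [0,∞). Let f : [0,∞) → [0,∞) be continuous with f(0) = 0 and f(s) > 0 for s > 0, and suppose limsup_{s→∞} (sup{f(t) : 0 ≤ t ≤ s})/f(s) < ∞ and ∫₁^∞ dt/Φ⁻¹(F(t)) = ∞, where F(t) = ∫₀^t f(s) ds. Define f̄(t) = sup{f(s) : 0 ≤ s ≤ t} and F̄(t) = ∫₀^t f̄(s) ds. Then f̄ is non-decreasing, f̄(0) = 0, f̄(t) > 0 for t > 0, and ∫₁^∞ dt/Φ⁻¹(F̄(t)) = ∞, i.e. f̄ also fails the φ-Keller–Osserman condition. -/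
open MeasureTheory Real Set Filter

/-- under (φ₁)-(φ₂), if f is continuous, f(0) = 0, f > 0 on (0,∞),
limsup_{s→∞} (sup{f(t) : 0 ≤ t ≤ s})/f(s) < ∞ and f fails the φ-Keller–Osserman
condition (∫₁^∞ dt/Φ⁻¹(F(t)) = ∞), then f̄(t) = sup{f(s) : 0 ≤ s ≤ t} is
non-decreasing, vanishes at 0, is positive on (0,∞), and also fails the
φ-Keller–Osserman condition. -/
theorem stmt11
    (φ Φ Φinv : ℝ → ℝ) (l m : ℝ)
    (hφC1 : ContDiffOn ℝ 1 φ (Set.Ioi 0))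
    (hφpos : ∀ t > (0:ℝ), 0 < φ t)
    (hΦ : ∀ t : ℝ, Φ t = ∫ s in (0:ℝ)..|t|, φ s * s)
    (hφ1 : ∀ t > (0:ℝ), 0 < deriv (fun s => φ s * s) t)
    (hl : 1 < l) (hm : 1 < m)
    (hφ2 : ∀ t > (0:ℝ), l ≤ φ t * t ^ 2 / Φ t ∧ φ t * t ^ 2 / Φ t ≤ m)
    (hΦinv_nonneg : ∀ t ≥ (0:ℝ), 0 ≤ Φinv t)
    (hΦinv_left : ∀ t ≥ (0:ℝ), Φinv (Φ t) = t)
    (hΦinv_right : ∀ t ≥ (0:ℝ), Φ (Φinv t) = t)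
    (f : ℝ → ℝ)
    (hf_cont : ContinuousOn f (Set.Ici 0))
    (hf0 : f 0 = 0)
    (hf_pos : ∀ s > (0:ℝ), 0 < f s)
    (hf_limsup : Filter.IsBoundedUnder (· ≤ ·) Filter.atTop
      (fun s => sSup (f '' Set.Icc 0 s) / f s))
    (hKO_fail : ¬ IntegrableOn (fun t => 1 / Φinv (∫ s in (0:ℝ)..t, f s)) (Set.Ioi 1)) :
    MonotoneOn (fun t => sSup (f '' Set.Icc 0 t)) (Set.Ici 0) ∧
    sSup (f '' Set.Icc 0 (0:ℝ)) = 0 ∧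
    (∀ t > (0:ℝ), 0 < sSup (f '' Set.Icc 0 t)) ∧
    ¬ IntegrableOn (fun t => 1 / Φinv (∫ s in (0:ℝ)..t, sSup (f '' Set.Icc 0 s))) (Set.Ioi 1) := by
  set fb : ℝ → ℝ := fun t => sSup (f '' Set.Icc 0 t) with hfb
  set F : ℝ → ℝ := fun t => ∫ s in (0:ℝ)..t, f s with hF
  set Fb : ℝ → ℝ := fun t => ∫ s in (0:ℝ)..t, fb s with hFb
  -- basic facts about f
  have hf_nonneg : ∀ s, 0 ≤ s → 0 ≤ f s := by
    intro s hs
    rcases eq_or_lt_of_le hs with h | h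
    · simp [← h, hf0]
    · exact (hf_pos s h).le
  have hbdd : ∀ t, BddAbove (f '' Set.Icc 0 t) := by
    intro t
    rcases le_or_gt 0 t with h | h
    · exact (isCompact_Icc.image_of_continuousOn
        (hf_cont.mono (Set.Icc_subset_Ici_self))).bddAbove
    · rw [Set.Icc_eq_empty (by linarith)]; simp
  have hfle : ∀ s t, 0 ≤ s → s ≤ t → f s ≤ fb t := by
    intro s t hs hst
    exact le_csSup (hbdd t) ⟨s, ⟨hs, hst⟩, rfl⟩
  have hmono : MonotoneOn fb (Set.Ici 0) := by
    intro a ha b hb hab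
    exact csSup_le_csSup (hbdd b) ⟨f 0, ⟨0, by simpa using ha, rfl⟩⟩
      (Set.image_mono (Set.Icc_subset_Icc_right hab))
  have hfb0 : fb 0 = 0 := by
    simp [hfb, Set.Icc_self, hf0]
  have hfbpos : ∀ t, 0 < t → 0 < fb t := fun t ht =>
    lt_of_lt_of_le (hf_pos t ht) (hfle t t ht.le le_rfl)
  have hfbnonneg : ∀ t, 0 ≤ t → 0 ≤ fb t := fun t ht => by
    have := hfle 0 t le_rfl ht; rwa [hf0] at this
  -- basic facts about Φ
  have hΦ0 : Φ 0 = 0 := by simp [hΦ 0]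
  have hΦpos : ∀ t, 0 < t → 0 < Φ t := by
    intro t ht
    by_contra h
    push_neg at h
    have h1 := (hφ2 t ht).1
    have hnum : 0 < φ t * t ^ 2 := mul_pos (hφpos t ht) (pow_pos ht 2)
    have : φ t * t ^ 2 / Φ t ≤ 0 := div_nonpos_of_nonneg_of_nonpos hnum.le h
    linarith
  have hφint : ∀ b, 0 < b → IntervalIntegrable (fun s => φ s * s) volume 0 b := by
    intro b hb
    by_contra h
    have := intervalIntegral.integral_undef h
    have hb' : Φ b = 0 := by rw [hΦ b, abs_of_pos hb, this]
    exact absurd hb' (hΦpos b hb).ne'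
  have hΦeq : ∀ t, 0 ≤ t → Φ t = ∫ s in (0:ℝ)..t, φ s * s := by
    intro t ht; rw [hΦ t, abs_of_nonneg ht]
  have hΦstrict : ∀ x y, 0 ≤ x → x < y → Φ x < Φ y := by
    intro x y hx hxy
    have hy : 0 < y := lt_of_le_of_lt hx hxy
    have hxyint : IntervalIntegrable (fun s => φ s * s) volume x y := by
      apply (hφint y hy).mono_set
      rw [Set.uIcc_of_le hxy.le, Set.uIcc_of_le hy.le]
      exact Set.Icc_subset_Icc hx le_rfl
    have hpos : 0 < ∫ s in x..y, φ s * s := by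
      apply intervalIntegral.intervalIntegral_pos_of_pos_on hxyint _ hxy
      intro s hs
      have hs0 : 0 < s := lt_of_le_of_lt hx hs.1
      exact mul_pos (hφpos s hs0) hs0
    have hsplit : Φ x + ∫ s in x..y, φ s * s = Φ y := by
      rw [hΦeq x hx, hΦeq y hy.le]
      exact intervalIntegral.integral_add_adjacent_intervals
        (by rcases eq_or_lt_of_le hx with h | h
            · simp [← h]
            · exact hφint x h) hxyint
    linarith
  have hΦmono : ∀ x y, 0 ≤ x → x ≤ y → Φ x ≤ Φ y := by
    intro x y hx hxy
    rcases eq_or_lt_of_le hxy with h | h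
    · simp [h]
    · exact (hΦstrict x y hx h).le
  have hΦinv_mono : ∀ a b, 0 ≤ a → a ≤ b → Φinv a ≤ Φinv b := by
    intro a b ha hab
    by_contra h
    push_neg at h
    have := hΦstrict (Φinv b) (Φinv a) (hΦinv_nonneg b (ha.trans hab)) h
    rw [hΦinv_right a ha, hΦinv_right b (ha.trans hab)] at this
    linarith
  have hΦinv_pos : ∀ v, 0 < v → 0 < Φinv v := by
    intro v hv
    rcases eq_or_lt_of_le (hΦinv_nonneg v hv.le) with h | h
    · exfalso
      have := hΦinv_right v hv.le
      rw [← h, hΦ0] at this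
      linarith
    · exact h
  -- doubling property of Φ
  have hΦdouble : ∀ u, 0 < u → (1 + l / 2) * Φ u ≤ Φ (2 * u) := by
    intro u hu
    have h2u : (0:ℝ) < 2 * u := by linarith
    have hIu : IntervalIntegrable (fun s => φ s * s) volume u (2*u) := by
      apply (hφint (2*u) h2u).mono_set
      rw [Set.uIcc_of_le (by linarith : u ≤ 2*u), Set.uIcc_of_le h2u.le]
      exact Set.Icc_subset_Icc hu.le le_rfl
    have hptwise : ∀ s ∈ Set.Icc u (2*u), l * Φ u / (2*u) ≤ φ s * s := by
      intro s hs
      have hs0 : 0 < s := lt_of_lt_of_le hu hs.1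
      have hΦs : 0 < Φ s := hΦpos s hs0
      have h1 : l * Φ s ≤ φ s * s ^ 2 := by
        have := (hφ2 s hs0).1
        rw [le_div_iff₀ hΦs] at this
        linarith
      have h2 : l * Φ u ≤ l * Φ s := by
        have := hΦmono u s hu.le hs.1
        nlinarith [hl]
      have h3 : φ s * s ^ 2 ≤ (φ s * s) * (2*u) := by
        have hφs : 0 < φ s * s := mul_pos (hφpos s hs0) hs0
        nlinarith [hs.2]
      rw [div_le_iff₀ h2u]
      nlinarith
    have hintle : ∫ s in u..(2*u), (l * Φ u / (2*u)) ≤ ∫ s in u..(2*u), φ s * s := by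
      apply intervalIntegral.integral_mono_on (by linarith) (intervalIntegrable_const) hIu
      exact hptwise
    rw [intervalIntegral.integral_const, smul_eq_mul] at hintle
    have hconst : (2*u - u) * (l * Φ u / (2*u)) = l * Φ u / 2 := by
      field_simp
      ring
    rw [hconst] at hintle
    have hsplit : Φ u + ∫ s in u..(2*u), φ s * s = Φ (2*u) := by
      rw [hΦeq u hu.le, hΦeq (2*u) h2u.le]
      exact intervalIntegral.integral_add_adjacent_intervals (hφint u hu) hIu
    linarith
  -- iterated doubling
  have hΦpow : ∀ n : ℕ, ∀ u, 0 ≤ u → (1 + l / 2) ^ n * Φ u ≤ Φ (2 ^ n * u) := by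
    intro n
    induction n with
    | zero => intro u hu; simp
    | succ n ih =>
      intro u hu
      rcases eq_or_lt_of_le hu with h | h
      · simp [← h, hΦ0]
      · have h1 : (1 + l/2) ^ (n+1) * Φ u = (1 + l/2) * ((1 + l/2) ^ n * Φ u) := by ring
        have h2 : (0:ℝ) < 1 + l/2 := by linarith
        have h3 : (1 + l/2) * ((1 + l/2) ^ n * Φ u) ≤ (1 + l/2) * Φ (2 ^ n * u) :=
          mul_le_mul_of_nonneg_left (ih u hu) h2.le
        have h4 : (0:ℝ) < 2 ^ n * u := by positivity
        have h5 := hΦdouble (2 ^ n * u) h4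
        have h6 : 2 * (2 ^ n * u) = 2 ^ (n+1) * u := by ring
        rw [h6] at h5
        linarith
  -- scaling of Φinv
  have hΦinv_scale : ∀ K : ℝ, 0 < K → ∃ D : ℝ, 1 ≤ D ∧
      ∀ v, 0 ≤ v → Φinv (K * v) ≤ D * Φinv v := by
    intro K hK
    obtain ⟨n, hn⟩ := pow_unbounded_of_one_lt K (by linarith : (1:ℝ) < 1 + l/2)
    refine ⟨2 ^ n, one_le_pow₀ (by norm_num : (1:ℝ) ≤ 2), ?_⟩
    intro v hv
    have hu := hΦinv_nonneg v hv
    have h1 : K * v ≤ (1 + l/2) ^ n * v := by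
      apply mul_le_mul_of_nonneg_right hn.le hv
    have h2 : (1 + l/2) ^ n * v ≤ Φ (2 ^ n * Φinv v) := by
      have := hΦpow n (Φinv v) hu
      rwa [hΦinv_right v hv] at this
    have h3 : Φinv (K * v) ≤ Φinv (Φ (2 ^ n * Φinv v)) :=
      hΦinv_mono _ _ (by positivity) (h1.trans h2)
    rwa [hΦinv_left _ (by positivity)] at h3
  -- integrability of f and fb
  have hfint : ∀ a b, 0 ≤ a → a ≤ b → IntervalIntegrable f volume a b := by
    intro a b ha hab
    apply ContinuousOn.intervalIntegrable
    apply hf_cont.mono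
    rw [Set.uIcc_of_le hab]
    exact fun x hx => ha.trans hx.1
  have hfbint : ∀ a b, 0 ≤ a → a ≤ b → IntervalIntegrable fb volume a b := by
    intro a b ha hab
    apply MonotoneOn.intervalIntegrable
    rw [Set.uIcc_of_le hab]
    exact hmono.mono (fun x hx => ha.trans hx.1)
  have hFpos : ∀ t, 0 < t → 0 < F t := by
    intro t ht
    exact intervalIntegral.intervalIntegral_pos_of_pos_on (hfint 0 t le_rfl ht.le)
      (fun s hs => hf_pos s hs.1) ht
  have hFbpos : ∀ t, 0 < t → 0 < Fb t := by
    intro t ht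
    exact intervalIntegral.intervalIntegral_pos_of_pos_on (hfbint 0 t le_rfl ht.le)
      (fun s hs => hfbpos s hs.1) ht
  have hFmono : ∀ a b, 0 ≤ a → a ≤ b → F a ≤ F b := by
    intro a b ha hab
    have hsplit : F a + ∫ s in a..b, f s = F b :=
      intervalIntegral.integral_add_adjacent_intervals (hfint 0 a le_rfl ha)
        (hfint a b ha hab)
    have hnn : 0 ≤ ∫ s in a..b, f s :=
      intervalIntegral.integral_nonneg hab (fun s hs => hf_nonneg s (ha.trans hs.1))
    linarith
  have hFnonneg : ∀ t, 0 ≤ t → 0 ≤ F t := by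
    intro t ht
    have := hFmono 0 t le_rfl ht
    simpa [hF, intervalIntegral.integral_same] using this
  -- extract the limsup bound
  obtain ⟨C, hC⟩ := hf_limsup
  rw [Filter.eventually_map] at hC
  obtain ⟨s₁, hs₁⟩ := Filter.eventually_atTop.mp hC
  set T : ℝ := max s₁ 1 with hTdef
  have hT1 : (1:ℝ) ≤ T := le_max_right _ _
  have hT0 : (0:ℝ) < T := lt_of_lt_of_le one_pos hT1
  set C' : ℝ := max C 1 with hC'def
  have hC'1 : (1:ℝ) ≤ C' := le_max_right _ _
  have hC'0 : (0:ℝ) ≤ C' := le_trans zero_le_one hC'1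
  have hfbC : ∀ s, T ≤ s → fb s ≤ C' * f s := by
    intro s hsT
    have hs0 : 0 < s := lt_of_lt_of_le hT0 hsT
    have h1 := hs₁ s (le_trans (le_max_left _ _) hsT)
    have hfs : 0 < f s := hf_pos s hs0
    have h2 : fb s ≤ C * f s := (div_le_iff₀ hfs).mp h1
    have h3 : C * f s ≤ C' * f s :=
      mul_le_mul_of_nonneg_right (le_max_left _ _) hfs.le
    linarith
  set A : ℝ := Fb T with hAdef
  have hA0 : 0 ≤ A := (hFbpos T hT0).le
  set FT : ℝ := F T with hFTdef
  have hFT0 : 0 < FT := hFpos T hT0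
  set K : ℝ := A / FT + C' with hKdef
  have hK0 : 0 < K := by
    rw [hKdef]
    have h : 0 ≤ A / FT := div_nonneg hA0 hFT0.le
    linarith
  have hFbK : ∀ t, T ≤ t → Fb t ≤ K * F t := by
    intro t ht
    have ht0 : 0 < t := lt_of_lt_of_le hT0 ht
    have hsplit : Fb T + ∫ s in T..t, fb s = Fb t :=
      intervalIntegral.integral_add_adjacent_intervals (hfbint 0 T le_rfl hT0.le)
        (hfbint T t hT0.le ht)
    have h1 : ∫ s in T..t, fb s ≤ ∫ s in T..t, C' * f s := by
      apply intervalIntegral.integral_mono_on ht (hfbint T t hT0.le ht)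
        ((hfint T t hT0.le ht).const_mul C')
      exact fun s hs => hfbC s hs.1
    have h2 : ∫ s in T..t, C' * f s = C' * ∫ s in T..t, f s :=
      intervalIntegral.integral_const_mul C' f
    have hsplitF : F T + ∫ s in T..t, f s = F t :=
      intervalIntegral.integral_add_adjacent_intervals (hfint 0 T le_rfl hT0.le)
        (hfint T t hT0.le ht)
    have hFTnn : 0 ≤ F T := hFT0.le
    have h3 : ∫ s in T..t, f s ≤ F t := by linarith
    have h4 : A = (A / FT) * FT := (div_mul_cancel₀ A hFT0.ne').symm
    have h5 : (A / FT) * FT ≤ (A / FT) * F t :=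
      mul_le_mul_of_nonneg_left (hFmono T t hT0.le ht) (div_nonneg hA0 hFT0.le)
    have h6 : C' * ∫ s in T..t, f s ≤ C' * F t :=
      mul_le_mul_of_nonneg_left h3 hC'0
    have hKFt : K * F t = (A / FT) * F t + C' * F t := by ring
    rw [hKFt]
    linarith
  obtain ⟨D, hD1, hD⟩ := hΦinv_scale K hK0
  have hD0 : 0 < D := lt_of_lt_of_le one_pos hD1
  -- the key pointwise estimate
  have hkey : ∀ t, T ≤ t → 1 / Φinv (F t) ≤ D * (1 / Φinv (Fb t)) := by
    intro t ht
    have ht0 : 0 < t := lt_of_lt_of_le hT0 ht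
    have hFt : 0 < F t := hFpos t ht0
    have hFbt : 0 < Fb t := hFbpos t ht0
    have h1 : Φinv (Fb t) ≤ Φinv (K * F t) :=
      hΦinv_mono _ _ hFbt.le (hFbK t ht)
    have h2 : Φinv (K * F t) ≤ D * Φinv (F t) := hD (F t) hFt.le
    have hpF : 0 < Φinv (F t) := hΦinv_pos _ hFt
    have hpFb : 0 < Φinv (Fb t) := hΦinv_pos _ hFbt
    rw [mul_one_div, div_le_div_iff₀ hpF hpFb, one_mul]
    exact h1.trans h2
  -- antitonicity of 1 / Φinv ∘ F on (0,∞)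
  have hganti : AntitoneOn (fun t => 1 / Φinv (F t)) (Set.Ioi 0) := by
    intro x hx y hy hxy
    have hpx : 0 < Φinv (F x) := hΦinv_pos _ (hFpos x hx)
    have h1 : Φinv (F x) ≤ Φinv (F y) :=
      hΦinv_mono _ _ (hFnonneg x (le_of_lt hx)) (hFmono x y (le_of_lt hx) hxy)
    exact one_div_le_one_div_of_le hpx h1
  refine ⟨hmono, hfb0, fun t ht => hfbpos t ht, ?_⟩
  intro hInt
  apply hKO_fail
  have hIoi : Set.Ioc 1 T ∪ Set.Ioi T = Set.Ioi 1 := Set.Ioc_union_Ioi_eq_Ioi hT1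
  rw [show Set.Ioi (1:ℝ) = Set.Ioc 1 T ∪ Set.Ioi T from hIoi.symm]
  apply MeasureTheory.IntegrableOn.union
  · -- bounded on (1, T]
    have hmeas : AEStronglyMeasurable (fun t => 1 / Φinv (F t))
        (volume.restrict (Set.Ioc 1 T)) :=
      (aemeasurable_restrict_of_antitoneOn measurableSet_Ioc
        (hganti.mono (fun x hx => lt_of_lt_of_le one_pos hx.1.le))).aestronglyMeasurable
    refine ⟨hmeas, ?_⟩
    apply MeasureTheory.HasFiniteIntegral.restrict_of_bounded
      (C := 1 / Φinv (F 1)) (by simp)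
    filter_upwards [ae_restrict_mem measurableSet_Ioc] with x hx
    have hx0 : (0:ℝ) < x := lt_trans one_pos hx.1
    have hpx : 0 < Φinv (F x) := hΦinv_pos _ (hFpos x hx0)
    rw [Real.norm_eq_abs, abs_of_nonneg (by positivity)]
    exact hganti (Set.mem_Ioi.mpr one_pos) (Set.mem_Ioi.mpr hx0) hx.1.le
  · -- dominated on (T, ∞)
    have h2 : IntegrableOn (fun t => D * (1 / Φinv (Fb t))) (Set.Ioi T) := by
      apply Integrable.const_mul
      exact hInt.mono_set (Set.Ioi_subset_Ioi hT1)
    apply Integrable.mono h2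
    · exact (aemeasurable_restrict_of_antitoneOn measurableSet_Ioi
        (hganti.mono (fun x hx => lt_of_lt_of_le hT0 hx.le))).aestronglyMeasurable
    · filter_upwards [ae_restrict_mem measurableSet_Ioi] with x hx
      have hx0 : 0 < x := lt_of_lt_of_le hT0 (le_of_lt hx)
      have hpx : 0 < Φinv (F x) := hΦinv_pos _ (hFpos x hx0)
      have hpbx : 0 < Φinv (Fb x) := hΦinv_pos _ (hFbpos x hx0)
      rw [Real.norm_eq_abs, Real.norm_eq_abs, abs_of_nonneg (by positivity),
        abs_of_nonneg (by positivity)]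
      exact hkey x (le_of_lt hx)
end

section
/- Let φ : (0,∞) → (0,∞) be a C¹ function satisfying (φ₁) and (φ₂) with constants l, m > 1, and let Φ⁻¹ be the inverse of Φ on [0,∞). Let f : [0,∞) → [0,∞) be continuous, non-decreasing, with f(0) = 0 and f(s) > 0 for s > 0, and let F(t) = ∫₀^t f(s) ds. Then for every α > 0 and every M > 1: ∫₀^∞ dτ/Φ⁻¹(F(α+τ) − F(α)) ≤ (1/Φ⁻¹(f(α)))·[ l/(l−1) − m/(m−1) + (m/(m−1))·M^{(m−1)/m} ] + ∫_M^∞ dτ/Φ⁻¹(F(τ)). -/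
open MeasureTheory Real Set Filter

set_option maxHeartbeats 1600000 in
/-- key estimate (4.4): under (φ₁)-(φ₂), for f continuous,
non-decreasing, f(0) = 0, f > 0 on (0,∞), for every α > 0 and M > 1:
∫₀^∞ dτ/Φ⁻¹(F(α+τ) − F(α)) ≤ (1/Φ⁻¹(f(α)))[l/(l−1) − m/(m−1) + (m/(m−1))M^{(m−1)/m}]
  + ∫_M^∞ dτ/Φ⁻¹(F(τ)). -/
theorem stmt12
    (φ Φ Φinv : ℝ → ℝ) (l m : ℝ)
    (hφC1 : ContDiffOn ℝ 1 φ (Set.Ioi 0))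
    (hφpos : ∀ t > (0:ℝ), 0 < φ t)
    (hΦ : ∀ t : ℝ, Φ t = ∫ s in (0:ℝ)..|t|, φ s * s)
    (hφ1 : ∀ t > (0:ℝ), 0 < deriv (fun s => φ s * s) t)
    (hl : 1 < l) (hm : 1 < m)
    (hφ2 : ∀ t > (0:ℝ), l ≤ φ t * t ^ 2 / Φ t ∧ φ t * t ^ 2 / Φ t ≤ m)
    (hΦinv_nonneg : ∀ t ≥ (0:ℝ), 0 ≤ Φinv t)
    (hΦinv_left : ∀ t ≥ (0:ℝ), Φinv (Φ t) = t)
    (hΦinv_right : ∀ t ≥ (0:ℝ), Φ (Φinv t) = t)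
    (f : ℝ → ℝ)
    (hf_cont : ContinuousOn f (Set.Ici 0))
    (hf0 : f 0 = 0)
    (hf_pos : ∀ s > (0:ℝ), 0 < f s)
    (hf_mono : MonotoneOn f (Set.Ici 0)) :
    ∀ α > (0:ℝ), ∀ M > (1:ℝ),
      (∫ τ in Set.Ioi (0:ℝ),
          1 / Φinv ((∫ s in (0:ℝ)..(α + τ), f s) - ∫ s in (0:ℝ)..α, f s)) ≤
        (1 / Φinv (f α)) *
            (l / (l - 1) - m / (m - 1) + (m / (m - 1)) * M ^ ((m - 1) / m)) +
          ∫ τ in Set.Ioi M, 1 / Φinv (∫ s in (0:ℝ)..τ, f s) := by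
  intro α hα M hM
  have hl0 : (0:ℝ) < l := by linarith
  have hm0 : (0:ℝ) < m := by linarith
  -- basic facts about Φ
  have hΦ0 : Φ 0 = 0 := by rw [hΦ]; simp
  have hΦint : ∀ t > (0:ℝ), IntervalIntegrable (fun s => φ s * s) volume 0 t := by
    intro t ht
    by_contra hni
    have h0 : Φ t = 0 := by
      rw [hΦ, abs_of_pos ht]; exact intervalIntegral.integral_undef hni
    have h2 := (hφ2 t ht).1
    rw [h0, div_zero] at h2
    linarith
  have hΦpos : ∀ t > (0:ℝ), 0 < Φ t := by
    intro t ht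
    have h2 := (hφ2 t ht).1
    by_contra hle
    push_neg at hle
    have hnum : 0 < φ t * t ^ 2 := mul_pos (hφpos t ht) (by positivity)
    have : φ t * t ^ 2 / Φ t ≤ 0 := div_nonpos_of_nonneg_of_nonpos hnum.le hle
    linarith
  have hΦmono : StrictMonoOn Φ (Set.Ici 0) := by
    intro x hx y hy hxy
    rcases eq_or_lt_of_le (Set.mem_Ici.mp hx : (0:ℝ) ≤ x) with h0 | h0
    · rw [← h0, hΦ0]; exact hΦpos y (by rw [← h0] at hxy; exact hxy)
    · have hib := hΦint y (h0.trans hxy)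
      have hixy : IntervalIntegrable (fun s => φ s * s) volume x y := by
        apply hib.mono_set
        rw [Set.uIcc_of_le (le_of_lt hxy), Set.uIcc_of_le (h0.le.trans hxy.le)]
        exact Set.Icc_subset_Icc h0.le le_rfl
      have hia := hΦint x h0
      have hadd := intervalIntegral.integral_add_adjacent_intervals hia hixy
      have hposint : 0 < ∫ s in x..y, φ s * s := by
        apply intervalIntegral.intervalIntegral_pos_of_pos_on hixy _ hxy
        intro s hs
        exact mul_pos (hφpos s (h0.trans hs.1)) (h0.trans hs.1)
      have e1 : Φ x = ∫ s in (0:ℝ)..x, φ s * s := by rw [hΦ, abs_of_pos h0]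
      have e2 : Φ y = ∫ s in (0:ℝ)..y, φ s * s := by
        rw [hΦ, abs_of_pos (h0.trans hxy)]
      rw [e1, e2, ← hadd]
      linarith
  -- facts about Φinv
  have hΦinv_mono : ∀ u v : ℝ, 0 ≤ u → u ≤ v → Φinv u ≤ Φinv v := by
    intro u v hu huv
    by_contra hlt
    push_neg at hlt
    have := hΦmono (hΦinv_nonneg v (hu.trans huv)) (hΦinv_nonneg u hu) hlt
    rw [hΦinv_right u hu, hΦinv_right v (hu.trans huv)] at this
    linarith
  have hΦinv_pos : ∀ u : ℝ, 0 < u → 0 < Φinv u := by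
    intro u hu
    rcases (hΦinv_nonneg u hu.le).eq_or_lt with h | h
    · exfalso
      have h2 := hΦinv_right u hu.le
      rw [← h, hΦ0] at h2
      linarith
    · exact h
  -- derivative of Φ
  have hcontφ : ContinuousOn (fun s => φ s * s) (Set.Ioi 0) :=
    (hφC1.continuousOn).mul continuousOn_id
  have hΦderiv : ∀ t > (0:ℝ), HasDerivAt Φ (φ t * t) t := by
    intro t ht
    have h1 : HasDerivAt (fun u => ∫ s in (0:ℝ)..u, φ s * s) (φ t * t) t :=
      intervalIntegral.integral_hasDerivAt_right (hΦint t ht)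
        (hcontφ.stronglyMeasurableAtFilter isOpen_Ioi t ht)
        (hcontφ.continuousAt (isOpen_Ioi.mem_nhds ht))
    apply h1.congr_of_eventuallyEq
    filter_upwards [eventually_gt_nhds ht] with u hu
    rw [hΦ, abs_of_pos hu]
  have hΦcont : ContinuousOn Φ (Set.Ioi 0) := fun t ht =>
    ((hΦderiv t ht).continuousAt).continuousWithinAt
  -- the key scaling derivative computation
  have hHderiv : ∀ p a s : ℝ, 0 < a → 0 < s →
      HasDerivAt (fun u => Φ (u * a) * u ^ (-p))
        (s ^ (-p - 1) * (φ (s * a) * (s * a) ^ 2 - p * Φ (s * a))) s := by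
    intro p a s ha hs
    have hsa : 0 < s * a := mul_pos hs ha
    have hA : HasDerivAt (fun u : ℝ => Φ (u * a)) (φ (s * a) * (s * a) * a) s :=
      (hΦderiv (s * a) hsa).comp s (hasDerivAt_mul_const a)
    have hB : HasDerivAt (fun u : ℝ => u ^ (-p)) (-p * s ^ (-p - 1)) s :=
      Real.hasDerivAt_rpow_const (Or.inl hs.ne')
    have hAB := hA.mul hB
    have hpow : s ^ (-p) = s ^ (-p - 1) * s := by
      rw [← Real.rpow_add_one hs.ne' (-p - 1)]; ring_nf
    refine HasDerivAt.congr_deriv hAB ?_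
    rw [hpow]
    ring
  -- scaling inequalities
  have hscale : ∀ p a c : ℝ, 0 < a → 0 < c →
      (∀ u > (0:ℝ), p * Φ u ≤ φ u * u ^ 2) → c ≤ 1 →
      Φ (c * a) ≤ c ^ p * Φ a := by
    intro p a c ha hc hkey hc1
    have hmonoH : MonotoneOn (fun u => Φ (u * a) * u ^ (-p)) (Set.Ioi 0) := by
      apply monotoneOn_of_deriv_nonneg (convex_Ioi 0)
      · apply ContinuousOn.mul
        · apply hΦcont.comp (continuousOn_id.mul continuousOn_const)
          intro x hx
          exact mul_pos hx ha
        · intro x hx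
          exact (Real.continuousAt_rpow_const x (-p) (Or.inl (ne_of_gt hx))).continuousWithinAt
      · rw [interior_Ioi]
        intro x hx
        exact ((hHderiv p a x ha hx).differentiableAt).differentiableWithinAt
      · rw [interior_Ioi]
        intro x hx
        rw [(hHderiv p a x ha hx).deriv]
        have hxa : 0 < x * a := mul_pos hx ha
        have hk := hkey (x * a) hxa
        have h1 : (0:ℝ) < x ^ (-p - 1) := Real.rpow_pos_of_pos hx _
        exact mul_nonneg h1.le (by linarith)
    have h10 : (1:ℝ) ∈ Set.Ioi (0:ℝ) := by norm_num
    have hcmem : c ∈ Set.Ioi (0:ℝ) := hc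
    have := hmonoH hcmem h10 hc1
    simp only [one_mul, Real.one_rpow, mul_one] at this
    have hcp : (0:ℝ) < c ^ p := Real.rpow_pos_of_pos hc p
    have hcnp : c ^ (-p) = (c ^ p)⁻¹ := by
      rw [Real.rpow_neg hc.le]
    calc Φ (c * a) = Φ (c * a) * c ^ (-p) * c ^ p := by
          rw [hcnp]; field_simp
      _ ≤ Φ a * c ^ p := by
          apply mul_le_mul_of_nonneg_right this hcp.le
      _ = c ^ p * Φ a := by ring
  have hscale' : ∀ p a c : ℝ, 0 < a →
      (∀ u > (0:ℝ), φ u * u ^ 2 ≤ p * Φ u) → 1 ≤ c →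
      Φ (c * a) ≤ c ^ p * Φ a := by
    intro p a c ha hkey hc1
    have hc : (0:ℝ) < c := lt_of_lt_of_le one_pos hc1
    have hmonoH : AntitoneOn (fun u => Φ (u * a) * u ^ (-p)) (Set.Ioi 0) := by
      apply antitoneOn_of_deriv_nonpos (convex_Ioi 0)
      · apply ContinuousOn.mul
        · apply hΦcont.comp (continuousOn_id.mul continuousOn_const)
          intro x hx
          exact mul_pos hx ha
        · intro x hx
          exact (Real.continuousAt_rpow_const x (-p) (Or.inl (ne_of_gt hx))).continuousWithinAt
      · rw [interior_Ioi]
        intro x hx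
        exact ((hHderiv p a x ha hx).differentiableAt).differentiableWithinAt
      · rw [interior_Ioi]
        intro x hx
        rw [(hHderiv p a x ha hx).deriv]
        have hxa : 0 < x * a := mul_pos hx ha
        have hk := hkey (x * a) hxa
        have h1 : (0:ℝ) < x ^ (-p - 1) := Real.rpow_pos_of_pos hx _
        exact mul_nonpos_of_nonneg_of_nonpos h1.le (by linarith)
    have h10 : (1:ℝ) ∈ Set.Ioi (0:ℝ) := by norm_num
    have hcmem : c ∈ Set.Ioi (0:ℝ) := hc
    have := hmonoH h10 hcmem hc1
    simp only [one_mul, Real.one_rpow, mul_one] at this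
    have hcp : (0:ℝ) < c ^ p := Real.rpow_pos_of_pos hc p
    have hcnp : c ^ (-p) = (c ^ p)⁻¹ := by rw [Real.rpow_neg hc.le]
    calc Φ (c * a) = Φ (c * a) * c ^ (-p) * c ^ p := by rw [hcnp]; field_simp
      _ ≤ Φ a * c ^ p := by apply mul_le_mul_of_nonneg_right this hcp.le
      _ = c ^ p * Φ a := by ring
  have hkey_l : ∀ u > (0:ℝ), l * Φ u ≤ φ u * u ^ 2 := by
    intro u hu
    have h2 := (hφ2 u hu).1
    have := hΦpos u hu
    rw [le_div_iff₀ this] at h2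
    linarith
  have hkey_m : ∀ u > (0:ℝ), φ u * u ^ 2 ≤ m * Φ u := by
    intro u hu
    have h2 := (hφ2 u hu).2
    have := hΦpos u hu
    rw [div_le_iff₀ this] at h2
    linarith
  -- facts about f and F
  set F : ℝ → ℝ := fun t => ∫ s in (0:ℝ)..t, f s with hFdef
  have hfi : ∀ x y : ℝ, 0 ≤ x → x ≤ y → IntervalIntegrable f volume x y := by
    intro x y hx hxy
    apply ContinuousOn.intervalIntegrable
    apply hf_cont.mono
    rw [Set.uIcc_of_le hxy]
    exact fun s hs => hx.trans hs.1
  have hFadd : ∀ x y : ℝ, 0 ≤ x → x ≤ y → F y - F x = ∫ s in x..y, f s := by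
    intro x y hx hxy
    have h1 := hfi 0 x le_rfl hx
    have h2 := hfi x y hx hxy
    have := intervalIntegral.integral_add_adjacent_intervals h1 h2
    simp only [hFdef]
    linarith
  have hFmono : ∀ x y : ℝ, 0 ≤ x → x ≤ y → F x ≤ F y := by
    intro x y hx hxy
    have := hFadd x y hx hxy
    have hnn : 0 ≤ ∫ s in x..y, f s := by
      apply intervalIntegral.integral_nonneg hxy
      intro s hs
      rcases eq_or_lt_of_le (hx.trans hs.1) with h | h
      · rw [← h, hf0]
      · exact (hf_pos s h).le
    linarith
  have hF0 : F 0 = 0 := by simp [hFdef]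
  have hFnonneg : ∀ x : ℝ, 0 ≤ x → 0 ≤ F x := by
    intro x hx
    have := hFmono 0 x le_rfl hx
    rw [hF0] at this; exact this
  have hFpos : ∀ x : ℝ, 0 < x → 0 < F x := by
    intro x hx
    apply intervalIntegral.intervalIntegral_pos_of_pos_on (hfi 0 x le_rfl hx.le) _ hx
    intro s hs
    exact hf_pos s hs.1
  -- key pointwise estimate: f α * τ ≤ F (α + τ) − F α
  have hkey1 : ∀ τ : ℝ, 0 < τ → f α * τ ≤ F (α + τ) - F α := by
    intro τ hτ
    rw [hFadd α (α + τ) hα.le (by linarith)]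
    have hconst : ∫ s in α..(α + τ), (fun _ => f α) s = f α * τ := by
      rw [intervalIntegral.integral_const]
      simp; ring
    rw [← hconst]
    apply intervalIntegral.integral_mono_on (by linarith)
      (intervalIntegrable_const) (hfi α (α + τ) hα.le (by linarith))
    intro s hs
    exact hf_mono (le_of_lt hα) (hα.le.trans hs.1) hs.1
  -- key estimate: F τ ≤ F (α + τ) − F α for τ ≥ 0
  have hkey2 : ∀ τ : ℝ, 0 ≤ τ → F τ ≤ F (α + τ) - F α := by
    intro τ hτ
    have h1 : F (α + τ) - F τ = ∫ s in τ..(τ + α), f s := by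
      rw [add_comm α τ]
      exact hFadd τ (τ + α) hτ (by linarith)
    have h2 : (∫ s in τ..(τ + α), f s) = ∫ s in (0:ℝ)..α, f (s + τ) := by
      rw [intervalIntegral.integral_comp_add_right (fun x => f x) τ]
      simp
      rw [add_comm α τ]
    have h3 : (∫ s in (0:ℝ)..α, f s) ≤ ∫ s in (0:ℝ)..α, f (s + τ) := by
      apply intervalIntegral.integral_mono_on hα.le
        (hfi 0 α le_rfl hα.le)
      · have := (hfi τ (τ + α) hτ (by linarith)).comp_add_right τ
        simpa using this
      · intro s hs
        exact hf_mono hs.1 (by simp at hs ⊢; linarith) (by linarith)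
    have : F α ≤ F (α + τ) - F τ := by rw [h1, h2]; exact h3
    linarith
  -- abbreviations
  set a : ℝ := Φinv (f α) with hadef
  have hfα : 0 < f α := hf_pos α hα
  have ha_pos : 0 < a := hΦinv_pos _ hfα
  have hΦa : Φ a = f α := hΦinv_right _ hfα.le
  -- the main integrand
  set h : ℝ → ℝ := fun τ => 1 / Φinv (F (α + τ) - F α) with hhdef
  set g : ℝ → ℝ := fun τ => 1 / Φinv (F τ) with hgdef
  have hGpos : ∀ τ : ℝ, 0 < τ → 0 < F (α + τ) - F α := by
    intro τ hτ
    have := hkey1 τ hτ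
    nlinarith [mul_pos hfα hτ]
  have hhnonneg : ∀ τ : ℝ, 0 < τ → 0 ≤ h τ := by
    intro τ hτ
    apply one_div_nonneg.mpr
    exact hΦinv_nonneg _ (hGpos τ hτ).le
  -- pointwise bound on Ioc 0 1
  have hb1 : ∀ τ ∈ Set.Ioc (0:ℝ) 1, h τ ≤ (1 / a) * τ ^ (-1 / l) := by
    intro τ hτ
    obtain ⟨hτ0, hτ1⟩ := hτ
    set c : ℝ := τ ^ (1 / l) with hcdef
    have hc0 : 0 < c := Real.rpow_pos_of_pos hτ0 _
    have hc1 : c ≤ 1 := Real.rpow_le_one hτ0.le hτ1 (by positivity)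
    have hcl : c ^ l = τ := by
      rw [hcdef, ← Real.rpow_mul hτ0.le, one_div_mul_cancel (ne_of_gt hl0), Real.rpow_one]
    have step1 : Φ (c * a) ≤ τ * f α := by
      have := hscale l a c ha_pos hc0 hkey_l hc1
      rw [hcl, hΦa] at this
      exact this
    have step2 : τ * f α ≤ F (α + τ) - F α := by
      have := hkey1 τ hτ0
      linarith
    have hca : 0 < c * a := mul_pos hc0 ha_pos
    have step3 : c * a ≤ Φinv (F (α + τ) - F α) := by
      have h1 : Φinv (Φ (c * a)) ≤ Φinv (F (α + τ) - F α) :=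
        hΦinv_mono _ _ (hΦpos _ hca).le (by linarith)
      rwa [hΦinv_left _ hca.le] at h1
    have step4 : h τ ≤ 1 / (c * a) := by
      simp only [hhdef]
      exact one_div_le_one_div_of_le hca step3
    have : (1:ℝ) / (c * a) = (1 / a) * τ ^ (-1 / l) := by
      rw [neg_div, Real.rpow_neg hτ0.le, ← hcdef]
      field_simp
    linarith
  -- pointwise bound on Ioc 1 M
  have hb2 : ∀ τ ∈ Set.Ioc (1:ℝ) M, h τ ≤ (1 / a) * τ ^ (-1 / m) := by
    intro τ hτ
    obtain ⟨hτ1, hτM⟩ := hτ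
    have hτ0 : (0:ℝ) < τ := by linarith
    set c : ℝ := τ ^ (1 / m) with hcdef
    have hc0 : 0 < c := Real.rpow_pos_of_pos hτ0 _
    have hc1 : 1 ≤ c := Real.one_le_rpow hτ1.le (by positivity)
    have hcl : c ^ m = τ := by
      rw [hcdef, ← Real.rpow_mul hτ0.le, one_div_mul_cancel (ne_of_gt hm0), Real.rpow_one]
    have step1 : Φ (c * a) ≤ τ * f α := by
      have := hscale' m a c ha_pos hkey_m hc1
      rw [hcl, hΦa] at this
      exact this
    have step2 : τ * f α ≤ F (α + τ) - F α := by
      have := hkey1 τ hτ0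
      linarith
    have hca : 0 < c * a := mul_pos hc0 ha_pos
    have step3 : c * a ≤ Φinv (F (α + τ) - F α) := by
      have h1 : Φinv (Φ (c * a)) ≤ Φinv (F (α + τ) - F α) :=
        hΦinv_mono _ _ (hΦpos _ hca).le (by linarith)
      rwa [hΦinv_left _ hca.le] at h1
    have step4 : h τ ≤ 1 / (c * a) := by
      simp only [hhdef]
      exact one_div_le_one_div_of_le hca step3
    have : (1:ℝ) / (c * a) = (1 / a) * τ ^ (-1 / m) := by
      rw [neg_div, Real.rpow_neg hτ0.le, ← hcdef]
      field_simp
    linarith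
  -- pointwise bound on Ioi M
  have hb3 : ∀ τ ∈ Set.Ioi M, h τ ≤ g τ := by
    intro τ hτ
    have hτ0 : (0:ℝ) < τ := by simp at hτ; linarith
    have hFτ : 0 < F τ := hFpos τ hτ0
    have h1 : 0 < Φinv (F τ) := hΦinv_pos _ hFτ
    have h2 : Φinv (F τ) ≤ Φinv (F (α + τ) - F α) :=
      hΦinv_mono _ _ hFτ.le (hkey2 τ hτ0.le)
    exact one_div_le_one_div_of_le h1 h2
  have hgnonneg : ∀ τ : ℝ, 0 < τ → 0 ≤ g τ := by
    intro τ hτ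
    exact one_div_nonneg.mpr (hΦinv_nonneg _ (hFnonneg τ hτ.le))
  have hganti : AntitoneOn g (Set.Ici M) := by
    intro x hx y hy hxy
    have hx0 : (0:ℝ) < x := lt_of_lt_of_le (by linarith) hx
    have hy0 : (0:ℝ) < y := lt_of_lt_of_le (by linarith) hy
    have h1 : 0 < Φinv (F x) := hΦinv_pos _ (hFpos x hx0)
    have h2 : Φinv (F x) ≤ Φinv (F y) :=
      hΦinv_mono _ _ (hFnonneg x hx0.le) (hFmono x y hx0.le hxy)
    exact one_div_le_one_div_of_le h1 h2
  -- value of the bracket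
  have hMe : (1:ℝ) ≤ M ^ ((m - 1) / m) :=
    Real.one_le_rpow hM.le (div_nonneg (by linarith) hm0.le)
  have hbracket : 0 ≤ l / (l - 1) - m / (m - 1) + m / (m - 1) * M ^ ((m - 1) / m) := by
    have h1 : (0:ℝ) < l / (l - 1) := by
      apply div_pos hl0; linarith
    have h2 : (0:ℝ) ≤ m / (m - 1) := by
      apply div_nonneg hm0.le; linarith
    nlinarith
  have hRHS2 : 0 ≤ ∫ τ in Set.Ioi M, g τ := by
    apply setIntegral_nonneg measurableSet_Ioi
    intro τ hτ
    exact hgnonneg τ (by simp at hτ; linarith)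
  -- reduce the goal to a statement about h and g
  have hgoal : (∫ τ in Set.Ioi (0:ℝ), h τ) ≤
      (1 / a) * (l / (l - 1) - m / (m - 1) + (m / (m - 1)) * M ^ ((m - 1) / m)) +
        ∫ τ in Set.Ioi M, g τ := by
    by_cases hI : IntegrableOn h (Set.Ioi (0:ℝ)) volume
    case neg =>
      rw [integral_undef hI]
      have h1 : (0:ℝ) ≤ 1 / a := by positivity
      have := mul_nonneg h1 hbracket
      linarith
    case pos =>
    -- split the integral
    have hU1 : Set.Ioc (1:ℝ) M ∪ Set.Ioi M = Set.Ioi 1 := Set.Ioc_union_Ioi_eq_Ioi hM.le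
    have hU0 : Set.Ioc (0:ℝ) 1 ∪ Set.Ioi 1 = Set.Ioi 0 :=
      Set.Ioc_union_Ioi_eq_Ioi zero_le_one
    have hI1 : IntegrableOn h (Set.Ioc (0:ℝ) 1) volume :=
      hI.mono_set (fun x hx => hx.1)
    have hI2 : IntegrableOn h (Set.Ioc (1:ℝ) M) volume :=
      hI.mono_set (fun x hx => by simp at hx ⊢; linarith [hx.1])
    have hI3 : IntegrableOn h (Set.Ioi M) volume :=
      hI.mono_set (fun x hx => by simp at hx ⊢; linarith)
    have hsplit : (∫ τ in Set.Ioi (0:ℝ), h τ) =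
        (∫ τ in Set.Ioc (0:ℝ) 1, h τ) + ((∫ τ in Set.Ioc (1:ℝ) M, h τ) +
          ∫ τ in Set.Ioi M, h τ) := by
      rw [← setIntegral_union (Set.Ioc_disjoint_Ioi le_rfl) measurableSet_Ioi hI2 hI3, hU1,
        ← setIntegral_union (Set.Ioc_disjoint_Ioi le_rfl) measurableSet_Ioi hI1
          (by rw [← hU1]; exact hI2.union hI3), hU0]
    -- first piece
    have hrl : (-1:ℝ) < -1 / l := by
      rw [neg_div]
      have : 1 / l < 1 := by rw [div_lt_one hl0]; linarith
      linarith
    have hrm : (-1:ℝ) < -1 / m := by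
      rw [neg_div]
      have : 1 / m < 1 := by rw [div_lt_one hm0]; linarith
      linarith
    have hint1 : IntegrableOn (fun τ : ℝ => (1 / a) * τ ^ (-1 / l)) (Set.Ioc (0:ℝ) 1) volume := by
      have := (intervalIntegral.intervalIntegrable_rpow' hrl (a := 0) (b := 1))
      rw [intervalIntegrable_iff_integrableOn_Ioc_of_le zero_le_one] at this
      exact this.const_mul _
    have hint2 : IntegrableOn (fun τ : ℝ => (1 / a) * τ ^ (-1 / m)) (Set.Ioc (1:ℝ) M) volume := by
      have := (intervalIntegral.intervalIntegrable_rpow' hrm (a := 1) (b := M))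
      rw [intervalIntegrable_iff_integrableOn_Ioc_of_le hM.le] at this
      exact this.const_mul _
    have hp1 : (∫ τ in Set.Ioc (0:ℝ) 1, h τ) ≤ (1 / a) * (l / (l - 1)) := by
      calc (∫ τ in Set.Ioc (0:ℝ) 1, h τ)
          ≤ ∫ τ in Set.Ioc (0:ℝ) 1, (1 / a) * τ ^ (-1 / l) :=
            setIntegral_mono_on hI1 hint1 measurableSet_Ioc hb1
        _ = (1 / a) * ∫ τ in Set.Ioc (0:ℝ) 1, τ ^ (-1 / l) := by
            rw [integral_const_mul]
        _ = (1 / a) * (l / (l - 1)) := by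
            congr 1
            rw [← intervalIntegral.integral_of_le zero_le_one]
            rw [integral_rpow (Or.inl hrl)]
            have hz : -1 / l + 1 ≠ 0 := by
              have : 1 / l < 1 := by rw [div_lt_one hl0]; linarith
              rw [neg_div]
              intro hc
              linarith
            have hlne : l ≠ 0 := ne_of_gt hl0
            have hl1ne : l - 1 ≠ 0 := by intro hc; linarith
            rw [Real.one_rpow, Real.zero_rpow hz,
              show -1 / l + 1 = (l - 1) / l by field_simp; ring, sub_zero, one_div_div]
    have hp2 : (∫ τ in Set.Ioc (1:ℝ) M, h τ) ≤
        (1 / a) * ((m / (m - 1)) * M ^ ((m - 1) / m) - m / (m - 1)) := by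
      calc (∫ τ in Set.Ioc (1:ℝ) M, h τ)
          ≤ ∫ τ in Set.Ioc (1:ℝ) M, (1 / a) * τ ^ (-1 / m) :=
            setIntegral_mono_on hI2 hint2 measurableSet_Ioc hb2
        _ = (1 / a) * ∫ τ in Set.Ioc (1:ℝ) M, τ ^ (-1 / m) := by
            rw [integral_const_mul]
        _ = (1 / a) * ((m / (m - 1)) * M ^ ((m - 1) / m) - m / (m - 1)) := by
            congr 1
            rw [← intervalIntegral.integral_of_le hM.le]
            rw [integral_rpow (Or.inl hrm)]
            rw [Real.one_rpow]
            have he : -1 / m + 1 = (m - 1) / m := by field_simp; ring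
            rw [he]
            have hmne : m ≠ 0 := ne_of_gt hm0
            have hm1ne : m - 1 ≠ 0 := by intro hc; linarith
            rw [div_div_eq_mul_div]
            field_simp
    -- third piece: need integrability of g on Ioi M
    have hgint : IntegrableOn g (Set.Ioi M) volume := by
      -- translate h
      have hInd : Integrable ((Set.Ioi (0:ℝ)).indicator h) volume :=
        (integrable_indicator_iff measurableSet_Ioi).mpr hI
      have hInd2 := hInd.comp_sub_right α
      have hEq : (fun τ => (Set.Ioi (0:ℝ)).indicator h (τ - α)) =
          (Set.Ioi α).indicator (fun τ => h (τ - α)) := by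
        funext τ
        by_cases hc : α < τ
        · rw [Set.indicator_of_mem (by simpa [sub_pos] using hc),
            Set.indicator_of_mem (by exact hc)]
        · rw [Set.indicator_of_notMem (by simpa [sub_pos] using hc),
            Set.indicator_of_notMem (by exact hc)]
      rw [hEq] at hInd2
      have hTrans : IntegrableOn (fun τ => h (τ - α)) (Set.Ioi α) volume :=
        (integrable_indicator_iff measurableSet_Ioi).mp hInd2
      -- g is dominated by the translate of h on Ioi (M + α)
      have hdom : IntegrableOn g (Set.Ioi (M + α)) volume := by
        apply Integrable.mono (hTrans.mono_set (fun x hx => by simp at hx ⊢; linarith))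
        · exact (aemeasurable_restrict_of_antitoneOn measurableSet_Ioi
            (hganti.mono (fun x hx => by simp at hx ⊢; linarith))).aestronglyMeasurable
        · apply (ae_restrict_iff' measurableSet_Ioi).mpr
          apply ae_of_all
          intro τ hτ
          simp only [Set.mem_Ioi] at hτ
          have hτα : 0 < τ - α := by linarith
          have hτ0 : (0:ℝ) < τ := by linarith
          have hgτ : 0 ≤ g τ := hgnonneg τ hτ0
          have hhτ : 0 ≤ h (τ - α) := hhnonneg (τ - α) hτα
          rw [Real.norm_eq_abs, Real.norm_eq_abs, abs_of_nonneg hgτ, abs_of_nonneg hhτ]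
          -- g τ ≤ h (τ - α)
          have harg : α + (τ - α) = τ := by ring
          have h1 : 0 < Φinv (F τ - F α) := by
            apply hΦinv_pos
            have := hkey1 (τ - α) hτα
            rw [harg] at this
            nlinarith [mul_pos hfα hτα]
          have h2 : Φinv (F τ - F α) ≤ Φinv (F τ) := by
            apply hΦinv_mono _ _ _ _
            · have := hkey1 (τ - α) hτα
              rw [harg] at this
              nlinarith [mul_pos hfα hτα]
            · have := hFnonneg α hα.le
              linarith
          simp only [hgdef, hhdef, harg]
          exact one_div_le_one_div_of_le h1 h2
      have hcomp : IntegrableOn g (Set.Ioc M (M + α)) volume := by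
        apply IntegrableOn.mono_set _ Set.Ioc_subset_Icc_self
        exact AntitoneOn.integrableOn_isCompact isCompact_Icc
          (hganti.mono (fun x hx => hx.1))
      have := hcomp.union hdom
      rwa [Set.Ioc_union_Ioi_eq_Ioi (by linarith : M ≤ M + α)] at this
    have hp3 : (∫ τ in Set.Ioi M, h τ) ≤ ∫ τ in Set.Ioi M, g τ :=
      setIntegral_mono_on hI3 hgint measurableSet_Ioi hb3
    rw [hsplit]
    have heq : (1 / a) * (l / (l - 1)) +
        (1 / a) * ((m / (m - 1)) * M ^ ((m - 1) / m) - m / (m - 1)) =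
        (1 / a) * (l / (l - 1) - m / (m - 1) + (m / (m - 1)) * M ^ ((m - 1) / m)) := by
      ring
    linarith
  exact hgoal
end
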